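/- arXiv:2406.14156 — 4 statements merged into one kernel-verified Lean document; each statement's English description precedes it below -/
import Mathlib

section
/- Risk-averse zero-sum games need not be strictly competitive: for π₁, π₂ ∈ Δ_2 define f₁(π₁,π₂) = (1/10) log( π₂(1)·exp(−10·π₁(1)) + π₂(2)·exp(−10·π₁(2)) ) and, for a parameter τ₂ > 0, f₂(π₁,π₂) = (1/τ₂) log( π₁(1)·exp(τ₂·π₂(1)) + π₁(2)·exp(τ₂·π₂(2)) ). Then for every τ₂ > 0 and all π₁, π₁′, π₂ ∈ Δ_2 satisfying π₂(1) ∈ (0.1, 0.5) and π₁(1) < π₁′(1) < 0.75 − π₁(1), one has both f₁(π₁,π₂) > f₁(π₁′,π₂) and f₂(π₁,π₂) > f₂(π₁′,π₂); in particular both players' losses strictly increase together, so the risk-adjusted game is not strictly competitive. -/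
/-- Entropic-risk-adjusted loss of player 1 in the 2×2 zero-sum game with identity
payoff matrix and risk-aversion parameter `τ₁ = 10`:
`f₁(π₁,π₂) = (1/10) log( π₂(1) e^{−10 π₁(1)} + π₂(2) e^{−10 π₁(2)} )`. -/
noncomputable def riskLoss1 (π₁ π₂ : Fin 2 → ℝ) : ℝ :=
  (1 / 10) * Real.log (π₂ 0 * Real.exp (-10 * π₁ 0) + π₂ 1 * Real.exp (-10 * π₁ 1))

/-- Entropic-risk-adjusted loss of player 2 with risk-aversion parameter `τ₂`:
`f₂(π₁,π₂) = (1/τ₂) log( π₁(1) e^{τ₂ π₂(1)} + π₁(2) e^{τ₂ π₂(2)} )`. -/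
noncomputable def riskLoss2 (τ₂ : ℝ) (π₁ π₂ : Fin 2 → ℝ) : ℝ :=
  (1 / τ₂) * Real.log (π₁ 0 * Real.exp (τ₂ * π₂ 0) + π₁ 1 * Real.exp (τ₂ * π₂ 1))

lemma exp25_gt_nine : (9:ℝ) < Real.exp 2.5 := by
  have h1 := Real.exp_one_gt_d9
  have h2 : Real.exp 2.5 = Real.exp 1 * Real.exp 1 * Real.exp 0.5 := by
    rw [← Real.exp_add, ← Real.exp_add]; norm_num
  have h3 : (1.5:ℝ) ≤ Real.exp 0.5 := by
    have := Real.add_one_le_exp (0.5:ℝ); linarith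
  rw [h2]; nlinarith [Real.exp_pos (1:ℝ)]

lemma aux1 (p a b : ℝ) (ha0 : 0 ≤ a) (hp1 : 0.1 < p) (hp2 : p < 0.5)
    (hab : a < b) (hsum : b < 0.75 - a) :
    p * Real.exp (-10*b) + (1-p) * Real.exp (-10*(1-b)) <
    p * Real.exp (-10*a) + (1-p) * Real.exp (-10*(1-a)) := by
  have hu : 0 < Real.exp (10*a) := Real.exp_pos _
  have hv : 0 < Real.exp (10*b) := Real.exp_pos _
  have hE : 0 < Real.exp 10 := Real.exp_pos _
  have huv : Real.exp (10*a) < Real.exp (10*b) := Real.exp_lt_exp.2 (by linarith)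
  have h75 : Real.exp (10*a) * Real.exp (10*b) < Real.exp 7.5 := by
    rw [← Real.exp_add]; exact Real.exp_lt_exp.2 (by linarith)
  have hE2 : Real.exp 10 = Real.exp 7.5 * Real.exp 2.5 := by
    rw [← Real.exp_add]; norm_num
  have h25 := exp25_gt_nine
  have hmain : (1-p) * (Real.exp (10*a) * Real.exp (10*b)) < p * Real.exp 10 := by
    rw [hE2]
    nlinarith [Real.exp_pos (7.5:ℝ), Real.exp_pos (2.5:ℝ), mul_pos hu hv]
  have ea : Real.exp (-10*a) = (Real.exp (10*a))⁻¹ := by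
    rw [show (-10*a : ℝ) = -(10*a) by ring, Real.exp_neg]
  have eb : Real.exp (-10*b) = (Real.exp (10*b))⁻¹ := by
    rw [show (-10*b : ℝ) = -(10*b) by ring, Real.exp_neg]
  have ea' : Real.exp (-10*(1-a)) = Real.exp (10*a) / Real.exp 10 := by
    rw [show (-10*(1-a) : ℝ) = 10*a - 10 by ring, Real.exp_sub]
  have eb' : Real.exp (-10*(1-b)) = Real.exp (10*b) / Real.exp 10 := by
    rw [show (-10*(1-b) : ℝ) = 10*b - 10 by ring, Real.exp_sub]
  rw [ea, eb, ea', eb']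
  set u := Real.exp (10*a)
  set v := Real.exp (10*b)
  set E := Real.exp 10
  have hfac : p * u⁻¹ + (1-p)*(u/E) - (p * v⁻¹ + (1-p)*(v/E))
      = (v - u) * (p*E - (1-p)*(u*v)) / (u*v*E) := by
    field_simp
    ring
  have hpos : 0 < (v - u) * (p*E - (1-p)*(u*v)) / (u*v*E) :=
    div_pos (mul_pos (by linarith) (by linarith)) (by positivity)
  linarith

/-- **Risk-averse zero-sum games need not be strictly competitive.**
For every `τ₂ > 0` and all `π₁, π₁′, π₂ ∈ Δ₂` with `π₂(1) ∈ (0.1, 0.5)` and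
`π₁(1) < π₁′(1) < 0.75 − π₁(1)`, both players' entropic-risk-adjusted losses strictly
increase when player 1 moves from `π₁` to `π₁′`. -/
theorem risk_averse_zero_sum_not_strictly_competitive
    (τ₂ : ℝ) (hτ₂ : 0 < τ₂)
    (π₁ π₁' π₂ : Fin 2 → ℝ)
    (hπ₁ : π₁ ∈ stdSimplex ℝ (Fin 2)) (hπ₁' : π₁' ∈ stdSimplex ℝ (Fin 2))
    (hπ₂ : π₂ ∈ stdSimplex ℝ (Fin 2))
    (hmem : π₂ 0 ∈ Set.Ioo (0.1 : ℝ) (0.5 : ℝ))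
    (hlt : π₁ 0 < π₁' 0) (hlt' : π₁' 0 < 0.75 - π₁ 0) :
    riskLoss1 π₁ π₂ > riskLoss1 π₁' π₂ ∧ riskLoss2 τ₂ π₁ π₂ > riskLoss2 τ₂ π₁' π₂ := by
  obtain ⟨h1nn, h1s⟩ := hπ₁
  obtain ⟨h1nn', h1s'⟩ := hπ₁'
  obtain ⟨h2nn, h2s⟩ := hπ₂
  simp only [Fin.sum_univ_two] at h1s h1s' h2s
  obtain ⟨hp1, hp2⟩ := hmem
  have ha1 : π₁ 1 = 1 - π₁ 0 := by linarith
  have hb1 : π₁' 1 = 1 - π₁' 0 := by linarith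
  have hp1' : π₂ 1 = 1 - π₂ 0 := by linarith
  have ha0 : 0 ≤ π₁ 0 := h1nn 0
  have hb0 : 0 ≤ π₁' 0 := h1nn' 0
  have hq0 : (0:ℝ) < 1 - π₂ 0 := by linarith
  have hp0 : (0:ℝ) < π₂ 0 := by linarith
  constructor
  · unfold riskLoss1
    rw [ha1, hb1, hp1']
    have key := aux1 (π₂ 0) (π₁ 0) (π₁' 0) ha0 hp1 hp2 hlt hlt'
    have hposY : 0 < π₂ 0 * Real.exp (-10 * π₁' 0) + (1 - π₂ 0) * Real.exp (-10 * (1 - π₁' 0)) := by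
      positivity
    exact mul_lt_mul_of_pos_left (Real.log_lt_log hposY key) (by norm_num)
  · unfold riskLoss2
    rw [ha1, hb1, hp1']
    have hb1' : π₁' 0 ≤ 1 := by have := h1nn' 1; linarith
    have hE1 : Real.exp (τ₂ * π₂ 0) < Real.exp (τ₂ * (1 - π₂ 0)) :=
      Real.exp_lt_exp.2 (by nlinarith)
    have hposY : 0 < π₁' 0 * Real.exp (τ₂ * π₂ 0) + (1 - π₁' 0) * Real.exp (τ₂ * (1 - π₂ 0)) := by
      nlinarith [Real.exp_pos (τ₂ * π₂ 0), Real.exp_pos (τ₂ * (1 - π₂ 0))]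
    have key2 : π₁' 0 * Real.exp (τ₂ * π₂ 0) + (1 - π₁' 0) * Real.exp (τ₂ * (1 - π₂ 0)) <
        π₁ 0 * Real.exp (τ₂ * π₂ 0) + (1 - π₁ 0) * Real.exp (τ₂ * (1 - π₂ 0)) := by
      nlinarith
    exact mul_lt_mul_of_pos_left (Real.log_lt_log hposY key2) (by positivity)
end

section
/- Tractability of RQE in 2-player games: assume D₁ and D₂ are jointly convex and continuous in both arguments, ν₁, ν₂ are continuous and strictly convex, ε₁, ε₂ > 0, and ξ₁, ξ₂ > 0 are such that H₁(p₁,π₂) = D₁(p₁,π₂) − ξ₁ν₂(π₂) is concave in π₂ for every fixed p₁ ∈ Δ_{A₂} and H₂(p₂,π₁) = D₂(p₂,π₁) − ξ₂ν₁(π₁) is concave in π₁ for every fixed p₂ ∈ Δ_{A₁}. If ε₁/ξ₁ ≥ ξ₂/ε₂ (equivalently ε₁ε₂ ≥ ξ₁ξ₂) and σ is a coarse correlated equilibrium of the auxiliary 4-player game with these parameters ξ₁, ξ₂, then the expected marginals π̂₁ = E_σ[π₁] and π̂₂ = E_σ[π₂] constitute a risk-adjusted quantal response equilibrium (RQE)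 of the 2-player risk-adjusted game. -/
open MeasureTheory

set_option maxHeartbeats 2000000

/-- Regularized risk-averse loss of player 1:
`f₁^{ε₁}(π₁,π₂) = sup_{p₁∈Δ_{A₂}}(−π₁ᵀR₁p₁ − D₁(p₁,π₂)) + ε₁ν₁(π₁)`. -/
noncomputable def loss1 (A₁ A₂ : ℕ) (R₁ : Matrix (Fin A₁) (Fin A₂) ℝ)
    (D₁ : (Fin A₂ → ℝ) → (Fin A₂ → ℝ) → ℝ) (ν₁ : (Fin A₁ → ℝ) → ℝ) (ε₁ : ℝ)
    (π₁ : Fin A₁ → ℝ) (π₂ : Fin A₂ → ℝ) : ℝ :=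
  sSup ((fun p => -(∑ a, ∑ b, π₁ a * R₁ a b * p b) - D₁ p π₂) ''
    stdSimplex ℝ (Fin A₂)) + ε₁ * ν₁ π₁

/-- Regularized risk-averse loss of player 2. -/
noncomputable def loss2 (A₁ A₂ : ℕ) (R₂ : Matrix (Fin A₂) (Fin A₁) ℝ)
    (D₂ : (Fin A₁ → ℝ) → (Fin A₁ → ℝ) → ℝ) (ν₂ : (Fin A₂ → ℝ) → ℝ) (ε₂ : ℝ)
    (π₁ : Fin A₁ → ℝ) (π₂ : Fin A₂ → ℝ) : ℝ :=
  sSup ((fun p => -(∑ a, ∑ b, π₂ a * R₂ a b * p b) - D₂ p π₁) ''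
    stdSimplex ℝ (Fin A₁)) + ε₂ * ν₂ π₂

/-- Strategy tuples `z = (π₁, p₁, π₂, p₂)` of the auxiliary 4-player game. -/
abbrev Tup (A₁ A₂ : ℕ) : Type :=
  (Fin A₁ → ℝ) × (Fin A₂ → ℝ) × (Fin A₂ → ℝ) × (Fin A₁ → ℝ)

/-- Loss of player `π₁` in the auxiliary 4-player game. -/
noncomputable def J₁ (A₁ A₂ : ℕ) (R₁ : Matrix (Fin A₁) (Fin A₂) ℝ)
    (D₁ : (Fin A₂ → ℝ) → (Fin A₂ → ℝ) → ℝ) (ν₁ : (Fin A₁ → ℝ) → ℝ) (ε₁ : ℝ)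
    (z : Tup A₁ A₂) : ℝ :=
  -(∑ a, ∑ b, z.1 a * R₁ a b * z.2.1 b) - D₁ z.2.1 z.2.2.1 + ε₁ * ν₁ z.1

/-- Loss of adversary `p₁` in the auxiliary 4-player game. -/
noncomputable def Jbar₁ (A₁ A₂ : ℕ) (R₁ : Matrix (Fin A₁) (Fin A₂) ℝ)
    (D₁ : (Fin A₂ → ℝ) → (Fin A₂ → ℝ) → ℝ) (ν₂ : (Fin A₂ → ℝ) → ℝ) (ξ₁ : ℝ)
    (z : Tup A₁ A₂) : ℝ :=
  (∑ a, ∑ b, z.1 a * R₁ a b * z.2.1 b) + D₁ z.2.1 z.2.2.1 - ξ₁ * ν₂ z.2.2.1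

/-- Loss of player `π₂` in the auxiliary 4-player game. -/
noncomputable def J₂ (A₁ A₂ : ℕ) (R₂ : Matrix (Fin A₂) (Fin A₁) ℝ)
    (D₂ : (Fin A₁ → ℝ) → (Fin A₁ → ℝ) → ℝ) (ν₂ : (Fin A₂ → ℝ) → ℝ) (ε₂ : ℝ)
    (z : Tup A₁ A₂) : ℝ :=
  -(∑ a, ∑ b, z.2.2.1 a * R₂ a b * z.2.2.2 b) - D₂ z.2.2.2 z.1 + ε₂ * ν₂ z.2.2.1

/-- Loss of adversary `p₂` in the auxiliary 4-player game. -/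
noncomputable def Jbar₂ (A₁ A₂ : ℕ) (R₂ : Matrix (Fin A₂) (Fin A₁) ℝ)
    (D₂ : (Fin A₁ → ℝ) → (Fin A₁ → ℝ) → ℝ) (ν₁ : (Fin A₁ → ℝ) → ℝ) (ξ₂ : ℝ)
    (z : Tup A₁ A₂) : ℝ :=
  (∑ a, ∑ b, z.2.2.1 a * R₂ a b * z.2.2.2 b) + D₂ z.2.2.2 z.1 - ξ₂ * ν₁ z.1

section AuxLemmas


/-- Tietze extension, function form. -/
lemma exists_cont_ext {X : Type*} [TopologicalSpace X] [NormalSpace X]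
    {s : Set X} (hs : IsClosed s) {f : X → ℝ} (hf : ContinuousOn f s) :
    ∃ g : X → ℝ, Continuous g ∧ ∀ x ∈ s, g x = f x := by
  obtain ⟨g, hg⟩ := ContinuousMap.exists_restrict_eq hs ⟨s.restrict f, hf.restrict⟩
  refine ⟨g, g.continuous, fun x hx => ?_⟩
  have := congrFun (congrArg ContinuousMap.toFun hg) ⟨x, hx⟩
  exact this

lemma integrable_of_cont {X E : Type*} [MeasurableSpace X] [TopologicalSpace X]
    [OpensMeasurableSpace X] [NormedAddCommGroup E]
    [TopologicalSpace.PseudoMetrizableSpace E] [SecondCountableTopology E]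
    {μ : Measure X} [IsFiniteMeasure μ] {K : Set X} (hK : IsCompact K)
    (hae : ∀ᵐ x ∂μ, x ∈ K) {f : X → E} (hf : Continuous f) : Integrable f μ := by
  obtain ⟨C, hC⟩ := hK.exists_bound_of_continuousOn hf.continuousOn
  refine ⟨hf.aestronglyMeasurable, HasFiniteIntegral.of_bounded (C := C) ?_⟩
  filter_upwards [hae] with x hx using hC x hx

lemma integrable_of_contOn {X : Type*} [MeasurableSpace X] [TopologicalSpace X]
    [OpensMeasurableSpace X] [NormalSpace X] {μ : Measure X} [IsFiniteMeasure μ]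
    {K : Set X} (hK : IsCompact K) (hKc : IsClosed K) (hae : ∀ᵐ x ∂μ, x ∈ K)
    {f : X → ℝ} (hf : ContinuousOn f K) : Integrable f μ := by
  obtain ⟨g, hgc, hg⟩ := exists_cont_ext hKc hf
  exact (integrable_of_cont hK hae hgc).congr
    (by filter_upwards [hae] with x hx using hg x hx)

lemma integral_eval {X : Type*} [MeasurableSpace X] {μ : Measure X} {n : ℕ}
    {f : X → (Fin n → ℝ)} (hf : Integrable f μ) (b : Fin n) :
    (∫ x, f x ∂μ) b = ∫ x, f x b ∂μ := by
  have := (ContinuousLinearMap.proj (R := ℝ) (φ := fun _ : Fin n => ℝ) b).integral_comp_comm hf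
  simpa [ContinuousLinearMap.proj_apply] using this.symm

lemma integrable_eval {X : Type*} [MeasurableSpace X] {μ : Measure X} {n : ℕ}
    {f : X → (Fin n → ℝ)} (hf : Integrable f μ) (b : Fin n) :
    Integrable (fun x => f x b) μ :=
  (ContinuousLinearMap.proj (R := ℝ) (φ := fun _ : Fin n => ℝ) b).integrable_comp hf

lemma integrable_bilin {X : Type*} [MeasurableSpace X] {μ : Measure X}
    {n m : ℕ} (R : Matrix (Fin n) (Fin m) ℝ) (x : Fin n → ℝ)
    {f : X → (Fin m → ℝ)} (hf : Integrable f μ) :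
    Integrable (fun z => ∑ a, ∑ b, x a * R a b * f z b) μ :=
  integrable_finset_sum _ fun a _ =>
    integrable_finset_sum _ fun b _ => (integrable_eval hf b).const_mul _

lemma integral_bilin {X : Type*} [MeasurableSpace X] {μ : Measure X}
    {n m : ℕ} (R : Matrix (Fin n) (Fin m) ℝ) (x : Fin n → ℝ)
    {f : X → (Fin m → ℝ)} (hf : Integrable f μ) :
    ∫ z, (∑ a, ∑ b, x a * R a b * f z b) ∂μ
      = ∑ a, ∑ b, x a * R a b * (∫ z, f z ∂μ) b := by
  rw [integral_finset_sum _ (fun a _ =>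
    integrable_finset_sum _ fun b _ => (integrable_eval hf b).const_mul _)]
  refine Finset.sum_congr rfl fun a _ => ?_
  rw [integral_finset_sum _ (fun b _ => (integrable_eval hf b).const_mul _)]
  refine Finset.sum_congr rfl fun b _ => ?_
  rw [integral_const_mul, integral_eval hf b]

lemma integrable_bilin' {X : Type*} [MeasurableSpace X] {μ : Measure X}
    {n m : ℕ} (R : Matrix (Fin n) (Fin m) ℝ) (y : Fin m → ℝ)
    {f : X → (Fin n → ℝ)} (hf : Integrable f μ) :
    Integrable (fun z => ∑ a, ∑ b, f z a * R a b * y b) μ := by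
  have : (fun z => ∑ a, ∑ b, f z a * R a b * y b)
      = fun z => ∑ a, ∑ b, (R a b * y b) * f z a := by
    funext z; refine Finset.sum_congr rfl fun a _ => Finset.sum_congr rfl fun b _ => by ring
  rw [this]
  exact integrable_finset_sum _ fun a _ =>
    integrable_finset_sum _ fun b _ => (integrable_eval hf a).const_mul _

lemma integral_bilin' {X : Type*} [MeasurableSpace X] {μ : Measure X}
    {n m : ℕ} (R : Matrix (Fin n) (Fin m) ℝ) (y : Fin m → ℝ)
    {f : X → (Fin n → ℝ)} (hf : Integrable f μ) :
    ∫ z, (∑ a, ∑ b, f z a * R a b * y b) ∂μ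
      = ∑ a, ∑ b, (∫ z, f z ∂μ) a * R a b * y b := by
  have h1 : (fun z => ∑ a, ∑ b, f z a * R a b * y b)
      = fun z => ∑ a, ∑ b, (R a b * y b) * f z a := by
    funext z; refine Finset.sum_congr rfl fun a _ => Finset.sum_congr rfl fun b _ => by ring
  rw [h1]
  rw [integral_finset_sum _ (fun a _ =>
    integrable_finset_sum _ fun b _ => (integrable_eval hf a).const_mul _)]
  refine Finset.sum_congr rfl fun a _ => ?_
  rw [integral_finset_sum _ (fun b _ => (integrable_eval hf a).const_mul _)]
  refine Finset.sum_congr rfl fun b _ => ?_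
  rw [integral_const_mul, integral_eval hf a]; ring

lemma loss_aux {n m : ℕ}
    (R : Matrix (Fin n) (Fin m) ℝ)
    (D : (Fin m → ℝ) → (Fin m → ℝ) → ℝ) (ν : (Fin n → ℝ) → ℝ) (ε : ℝ)
    (πh : Fin n → ℝ) (πo : Fin m → ℝ) (ph : Fin m → ℝ)
    (hph : ph ∈ stdSimplex ℝ (Fin m))
    (hDcont : ContinuousOn (fun p => D p πo) (stdSimplex ℝ (Fin m)))
    (I ID N C : ℝ)
    (hA : ∀ x ∈ stdSimplex ℝ (Fin n),
      -I + ε * N ≤ -(∑ a, ∑ b, x a * R a b * ph b) + ε * ν x)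
    (hB : ∀ y ∈ stdSimplex ℝ (Fin m),
      I + ID + C ≤ (∑ a, ∑ b, πh a * R a b * y b) + D y πo)
    (hID : D ph πo ≤ ID)
    (hg : ε * ν πh - ε * N ≤ C) :
    ∀ x ∈ stdSimplex ℝ (Fin n),
      sSup ((fun p => -(∑ a, ∑ b, πh a * R a b * p b) - D p πo) ''
          stdSimplex ℝ (Fin m)) + ε * ν πh
        ≤ sSup ((fun p => -(∑ a, ∑ b, x a * R a b * p b) - D p πo) ''
          stdSimplex ℝ (Fin m)) + ε * ν x := by
  intro x hx
  have hne : (stdSimplex ℝ (Fin m)).Nonempty := ⟨ph, hph⟩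
  have h1 : sSup ((fun p => -(∑ a, ∑ b, πh a * R a b * p b) - D p πo) ''
      stdSimplex ℝ (Fin m)) ≤ -(I + ID + C) := by
    refine csSup_le (hne.image _) ?_
    rintro v ⟨p, hp, rfl⟩
    have := hB p hp
    simp only
    linarith
  have hcont : ContinuousOn
      (fun p : Fin m → ℝ => -(∑ a, ∑ b, x a * R a b * p b) - D p πo)
      (stdSimplex ℝ (Fin m)) := by
    refine ContinuousOn.sub (Continuous.continuousOn ?_).neg hDcont
    exact continuous_finset_sum _ fun a _ => continuous_finset_sum _ fun b _ =>
      (continuous_const.mul (continuous_apply b))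
  have hbdd : BddAbove ((fun p => -(∑ a, ∑ b, x a * R a b * p b) - D p πo) ''
      stdSimplex ℝ (Fin m)) :=
    ((isCompact_stdSimplex _ _).image_of_continuousOn hcont).bddAbove
  have h2 : -(∑ a, ∑ b, x a * R a b * ph b) - D ph πo
      ≤ sSup ((fun p => -(∑ a, ∑ b, x a * R a b * p b) - D p πo) ''
        stdSimplex ℝ (Fin m)) :=
    le_csSup hbdd ⟨ph, hph, rfl⟩
  have h3 := hA x hx
  linarith

end AuxLemmas

/-- **Tractability of RQE in 2-player games.**
Assume `D₁, D₂` are jointly convex and continuous, `ν₁, ν₂` are continuous and strictly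
convex, `ξ₁, ξ₂ > 0` make `D₁(p₁,·) − ξ₁ν₂(·)` and `D₂(p₂,·) − ξ₂ν₁(·)` concave, and
`ε₁/ξ₁ ≥ ξ₂/ε₂`.  Then for any coarse correlated equilibrium `σ` of the auxiliary
4-player game, the expected marginals `π̂₁ = E_σ[π₁]`, `π̂₂ = E_σ[π₂]` constitute a
risk-adjusted quantal response equilibrium of the 2-player risk-adjusted game. -/
theorem rqe_tractable_two_player
    (A₁ A₂ : ℕ) (hA₁ : 1 ≤ A₁) (hA₂ : 1 ≤ A₂)
    (R₁ : Matrix (Fin A₁) (Fin A₂) ℝ) (R₂ : Matrix (Fin A₂) (Fin A₁) ℝ)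
    (D₁ : (Fin A₂ → ℝ) → (Fin A₂ → ℝ) → ℝ) (D₂ : (Fin A₁ → ℝ) → (Fin A₁ → ℝ) → ℝ)
    (ν₁ : (Fin A₁ → ℝ) → ℝ) (ν₂ : (Fin A₂ → ℝ) → ℝ)
    (ε₁ ε₂ ξ₁ ξ₂ : ℝ)
    (hD₁conv : ConvexOn ℝ ((stdSimplex ℝ (Fin A₂)) ×ˢ (stdSimplex ℝ (Fin A₂)))
      (fun q : (Fin A₂ → ℝ) × (Fin A₂ → ℝ) => D₁ q.1 q.2))
    (hD₂conv : ConvexOn ℝ ((stdSimplex ℝ (Fin A₁)) ×ˢ (stdSimplex ℝ (Fin A₁)))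
      (fun q : (Fin A₁ → ℝ) × (Fin A₁ → ℝ) => D₂ q.1 q.2))
    (hD₁cont : ContinuousOn (fun q : (Fin A₂ → ℝ) × (Fin A₂ → ℝ) => D₁ q.1 q.2)
      ((stdSimplex ℝ (Fin A₂)) ×ˢ (stdSimplex ℝ (Fin A₂))))
    (hD₂cont : ContinuousOn (fun q : (Fin A₁ → ℝ) × (Fin A₁ → ℝ) => D₂ q.1 q.2)
      ((stdSimplex ℝ (Fin A₁)) ×ˢ (stdSimplex ℝ (Fin A₁))))
    (hν₁cont : ContinuousOn ν₁ (stdSimplex ℝ (Fin A₁)))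
    (hν₂cont : ContinuousOn ν₂ (stdSimplex ℝ (Fin A₂)))
    (hν₁conv : StrictConvexOn ℝ (stdSimplex ℝ (Fin A₁)) ν₁)
    (hν₂conv : StrictConvexOn ℝ (stdSimplex ℝ (Fin A₂)) ν₂)
    (hε₁ : 0 < ε₁) (hε₂ : 0 < ε₂) (hξ₁ : 0 < ξ₁) (hξ₂ : 0 < ξ₂)
    (hconc₁ : ∀ p₁ ∈ stdSimplex ℝ (Fin A₂),
      ConcaveOn ℝ (stdSimplex ℝ (Fin A₂)) (fun π₂ => D₁ p₁ π₂ - ξ₁ * ν₂ π₂))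
    (hconc₂ : ∀ p₂ ∈ stdSimplex ℝ (Fin A₁),
      ConcaveOn ℝ (stdSimplex ℝ (Fin A₁)) (fun π₁ => D₂ p₂ π₁ - ξ₂ * ν₁ π₁))
    (hratio : ξ₂ / ε₂ ≤ ε₁ / ξ₁)
    -- σ is a CCE of the auxiliary 4-player game:
    (σ : Measure (Tup A₁ A₂)) [IsProbabilityMeasure σ]
    (hsupp : ∀ᵐ z ∂σ, z.1 ∈ stdSimplex ℝ (Fin A₁) ∧ z.2.1 ∈ stdSimplex ℝ (Fin A₂) ∧
      z.2.2.1 ∈ stdSimplex ℝ (Fin A₂) ∧ z.2.2.2 ∈ stdSimplex ℝ (Fin A₁))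
    (hCCEπ₁ : ∀ x ∈ stdSimplex ℝ (Fin A₁),
      (∫ z, J₁ A₁ A₂ R₁ D₁ ν₁ ε₁ z ∂σ)
        ≤ ∫ z, J₁ A₁ A₂ R₁ D₁ ν₁ ε₁ (x, z.2) ∂σ)
    (hCCEp₁ : ∀ y ∈ stdSimplex ℝ (Fin A₂),
      (∫ z, Jbar₁ A₁ A₂ R₁ D₁ ν₂ ξ₁ z ∂σ)
        ≤ ∫ z, Jbar₁ A₁ A₂ R₁ D₁ ν₂ ξ₁ (z.1, y, z.2.2) ∂σ)
    (hCCEπ₂ : ∀ y ∈ stdSimplex ℝ (Fin A₂),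
      (∫ z, J₂ A₁ A₂ R₂ D₂ ν₂ ε₂ z ∂σ)
        ≤ ∫ z, J₂ A₁ A₂ R₂ D₂ ν₂ ε₂ (z.1, z.2.1, y, z.2.2.2) ∂σ)
    (hCCEp₂ : ∀ x ∈ stdSimplex ℝ (Fin A₁),
      (∫ z, Jbar₂ A₁ A₂ R₂ D₂ ν₁ ξ₂ z ∂σ)
        ≤ ∫ z, Jbar₂ A₁ A₂ R₂ D₂ ν₁ ξ₂ (z.1, z.2.1, z.2.2.1, x) ∂σ) :
    -- the expected marginals π̂₁ = E_σ[π₁], π̂₂ = E_σ[π₂] form an RQE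
    (∫ z, z.1 ∂σ) ∈ stdSimplex ℝ (Fin A₁) ∧
    (∫ z, z.2.2.1 ∂σ) ∈ stdSimplex ℝ (Fin A₂) ∧
    (∀ x ∈ stdSimplex ℝ (Fin A₁),
      loss1 A₁ A₂ R₁ D₁ ν₁ ε₁ (∫ z, z.1 ∂σ) (∫ z, z.2.2.1 ∂σ)
        ≤ loss1 A₁ A₂ R₁ D₁ ν₁ ε₁ x (∫ z, z.2.2.1 ∂σ)) ∧
    (∀ y ∈ stdSimplex ℝ (Fin A₂),
      loss2 A₁ A₂ R₂ D₂ ν₂ ε₂ (∫ z, z.1 ∂σ) (∫ z, z.2.2.1 ∂σ)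
        ≤ loss2 A₁ A₂ R₂ D₂ ν₂ ε₂ (∫ z, z.1 ∂σ) y) := by
  classical
  -- the product set of the four simplices
  set T : Set (Tup A₁ A₂) :=
    (stdSimplex ℝ (Fin A₁)) ×ˢ ((stdSimplex ℝ (Fin A₂)) ×ˢ
      ((stdSimplex ℝ (Fin A₂)) ×ˢ (stdSimplex ℝ (Fin A₁)))) with hTdef
  have hTcomp : IsCompact T :=
    (isCompact_stdSimplex _ _).prod ((isCompact_stdSimplex _ _).prod
      ((isCompact_stdSimplex _ _).prod (isCompact_stdSimplex _ _)))
  have hTcl : IsClosed T :=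
    (isClosed_stdSimplex _ _).prod ((isClosed_stdSimplex _ _).prod
      ((isClosed_stdSimplex _ _).prod (isClosed_stdSimplex _ _)))
  have haeT : ∀ᵐ z ∂σ, z ∈ T := by
    filter_upwards [hsupp] with z hz
    simp only [hTdef, Set.mem_prod]
    exact ⟨hz.1, hz.2.1, hz.2.2.1, hz.2.2.2⟩
  have hTmem : ∀ z ∈ T, z.1 ∈ stdSimplex ℝ (Fin A₁) ∧ z.2.1 ∈ stdSimplex ℝ (Fin A₂) ∧
      z.2.2.1 ∈ stdSimplex ℝ (Fin A₂) ∧ z.2.2.2 ∈ stdSimplex ℝ (Fin A₁) := by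
    intro z hz
    simp only [hTdef, Set.mem_prod] at hz
    exact hz
  -- coordinate maps
  have hc1 : Continuous (fun z : Tup A₁ A₂ => z.1) := continuous_fst
  have hc21 : Continuous (fun z : Tup A₁ A₂ => z.2.1) := continuous_fst.comp continuous_snd
  have hc221 : Continuous (fun z : Tup A₁ A₂ => z.2.2.1) :=
    continuous_fst.comp (continuous_snd.comp continuous_snd)
  have hc222 : Continuous (fun z : Tup A₁ A₂ => z.2.2.2) :=
    continuous_snd.comp (continuous_snd.comp continuous_snd)
  have hi1 : Integrable (fun z : Tup A₁ A₂ => z.1) σ := integrable_of_cont hTcomp haeT hc1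
  have hi21 : Integrable (fun z : Tup A₁ A₂ => z.2.1) σ := integrable_of_cont hTcomp haeT hc21
  have hi221 : Integrable (fun z : Tup A₁ A₂ => z.2.2.1) σ := integrable_of_cont hTcomp haeT hc221
  have hi222 : Integrable (fun z : Tup A₁ A₂ => z.2.2.2) σ := integrable_of_cont hTcomp haeT hc222
  -- a.e. membership of coordinates
  have hae1 : ∀ᵐ z ∂σ, (fun z : Tup A₁ A₂ => z.1) z ∈ stdSimplex ℝ (Fin A₁) :=
    hsupp.mono fun z h => h.1
  have hae21 : ∀ᵐ z ∂σ, (fun z : Tup A₁ A₂ => z.2.1) z ∈ stdSimplex ℝ (Fin A₂) :=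
    hsupp.mono fun z h => h.2.1
  have hae221 : ∀ᵐ z ∂σ, (fun z : Tup A₁ A₂ => z.2.2.1) z ∈ stdSimplex ℝ (Fin A₂) :=
    hsupp.mono fun z h => h.2.2.1
  have hae222 : ∀ᵐ z ∂σ, (fun z : Tup A₁ A₂ => z.2.2.2) z ∈ stdSimplex ℝ (Fin A₁) :=
    hsupp.mono fun z h => h.2.2.2
  -- marginal memberships
  have hm1 : (∫ z, z.1 ∂σ) ∈ stdSimplex ℝ (Fin A₁) :=
    (convex_stdSimplex ℝ _).integral_mem (isClosed_stdSimplex _ _) hae1 hi1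
  have hm21 : (∫ z, z.2.1 ∂σ) ∈ stdSimplex ℝ (Fin A₂) :=
    (convex_stdSimplex ℝ _).integral_mem (isClosed_stdSimplex _ _) hae21 hi21
  have hm221 : (∫ z, z.2.2.1 ∂σ) ∈ stdSimplex ℝ (Fin A₂) :=
    (convex_stdSimplex ℝ _).integral_mem (isClosed_stdSimplex _ _) hae221 hi221
  have hm222 : (∫ z, z.2.2.2 ∂σ) ∈ stdSimplex ℝ (Fin A₁) :=
    (convex_stdSimplex ℝ _).integral_mem (isClosed_stdSimplex _ _) hae222 hi222
  -- integrability of the bilinear terms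
  have hcB₁ : Continuous (fun z : Tup A₁ A₂ => ∑ a, ∑ b, z.1 a * R₁ a b * z.2.1 b) :=
    continuous_finset_sum _ fun a _ => continuous_finset_sum _ fun b _ =>
      (((continuous_apply a).comp hc1).mul continuous_const).mul
        ((continuous_apply b).comp hc21)
  have hcB₂ : Continuous (fun z : Tup A₁ A₂ => ∑ a, ∑ b, z.2.2.1 a * R₂ a b * z.2.2.2 b) :=
    continuous_finset_sum _ fun a _ => continuous_finset_sum _ fun b _ =>
      (((continuous_apply a).comp hc221).mul continuous_const).mul
        ((continuous_apply b).comp hc222)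
  have hiB₁ : Integrable (fun z : Tup A₁ A₂ => ∑ a, ∑ b, z.1 a * R₁ a b * z.2.1 b) σ :=
    integrable_of_cont hTcomp haeT hcB₁
  have hiB₂ : Integrable (fun z : Tup A₁ A₂ => ∑ a, ∑ b, z.2.2.1 a * R₂ a b * z.2.2.2 b) σ :=
    integrable_of_cont hTcomp haeT hcB₂
  -- integrability of the penalty and regularizer terms
  have hiD₁ : Integrable (fun z : Tup A₁ A₂ => D₁ z.2.1 z.2.2.1) σ :=
    integrable_of_contOn hTcomp hTcl haeT
      (hD₁cont.comp (hc21.prodMk hc221).continuousOn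
        (fun z hz => Set.mem_prod.mpr ⟨(hTmem z hz).2.1, (hTmem z hz).2.2.1⟩))
  have hiD₂ : Integrable (fun z : Tup A₁ A₂ => D₂ z.2.2.2 z.1) σ :=
    integrable_of_contOn hTcomp hTcl haeT
      (hD₂cont.comp (hc222.prodMk hc1).continuousOn
        (fun z hz => Set.mem_prod.mpr ⟨(hTmem z hz).2.2.2, (hTmem z hz).1⟩))
  have hiν₁ : Integrable (fun z : Tup A₁ A₂ => ν₁ z.1) σ :=
    integrable_of_contOn hTcomp hTcl haeT
      (hν₁cont.comp hc1.continuousOn (fun z hz => (hTmem z hz).1))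
  have hiν₂ : Integrable (fun z : Tup A₁ A₂ => ν₂ z.2.2.1) σ :=
    integrable_of_contOn hTcomp hTcl haeT
      (hν₂cont.comp hc221.continuousOn (fun z hz => (hTmem z hz).2.2.1))
  -- total integrals of the four auxiliary losses
  have hJ1 : ∫ z, J₁ A₁ A₂ R₁ D₁ ν₁ ε₁ z ∂σ
      = -(∫ z, (∑ a, ∑ b, z.1 a * R₁ a b * z.2.1 b) ∂σ)
        - (∫ z, D₁ z.2.1 z.2.2.1 ∂σ) + ε₁ * ∫ z, ν₁ z.1 ∂σ := by
    simp only [J₁]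
    have hf3 : Integrable (fun z : Tup A₁ A₂ =>
        -(∑ a, ∑ b, z.1 a * R₁ a b * z.2.1 b)) σ := hiB₁.neg
    have hf1 : Integrable (fun z : Tup A₁ A₂ =>
        -(∑ a, ∑ b, z.1 a * R₁ a b * z.2.1 b) - D₁ z.2.1 z.2.2.1) σ := hf3.sub hiD₁
    have hf2 : Integrable (fun z : Tup A₁ A₂ => ε₁ * ν₁ z.1) σ := hiν₁.const_mul ε₁
    rw [integral_add hf1 hf2, integral_sub hf3 hiD₁, integral_neg, integral_const_mul]
  have hJbar1 : ∫ z, Jbar₁ A₁ A₂ R₁ D₁ ν₂ ξ₁ z ∂σ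
      = (∫ z, (∑ a, ∑ b, z.1 a * R₁ a b * z.2.1 b) ∂σ)
        + (∫ z, D₁ z.2.1 z.2.2.1 ∂σ) - ξ₁ * ∫ z, ν₂ z.2.2.1 ∂σ := by
    simp only [Jbar₁]
    have hf1 : Integrable (fun z : Tup A₁ A₂ =>
        (∑ a, ∑ b, z.1 a * R₁ a b * z.2.1 b) + D₁ z.2.1 z.2.2.1) σ := hiB₁.add hiD₁
    have hf2 : Integrable (fun z : Tup A₁ A₂ => ξ₁ * ν₂ z.2.2.1) σ := hiν₂.const_mul ξ₁
    rw [integral_sub hf1 hf2, integral_add hiB₁ hiD₁, integral_const_mul]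
  have hJ2 : ∫ z, J₂ A₁ A₂ R₂ D₂ ν₂ ε₂ z ∂σ
      = -(∫ z, (∑ a, ∑ b, z.2.2.1 a * R₂ a b * z.2.2.2 b) ∂σ)
        - (∫ z, D₂ z.2.2.2 z.1 ∂σ) + ε₂ * ∫ z, ν₂ z.2.2.1 ∂σ := by
    simp only [J₂]
    have hf3 : Integrable (fun z : Tup A₁ A₂ =>
        -(∑ a, ∑ b, z.2.2.1 a * R₂ a b * z.2.2.2 b)) σ := hiB₂.neg
    have hf1 : Integrable (fun z : Tup A₁ A₂ =>
        -(∑ a, ∑ b, z.2.2.1 a * R₂ a b * z.2.2.2 b) - D₂ z.2.2.2 z.1) σ := hf3.sub hiD₂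
    have hf2 : Integrable (fun z : Tup A₁ A₂ => ε₂ * ν₂ z.2.2.1) σ := hiν₂.const_mul ε₂
    rw [integral_add hf1 hf2, integral_sub hf3 hiD₂, integral_neg, integral_const_mul]
  have hJbar2 : ∫ z, Jbar₂ A₁ A₂ R₂ D₂ ν₁ ξ₂ z ∂σ
      = (∫ z, (∑ a, ∑ b, z.2.2.1 a * R₂ a b * z.2.2.2 b) ∂σ)
        + (∫ z, D₂ z.2.2.2 z.1 ∂σ) - ξ₂ * ∫ z, ν₁ z.1 ∂σ := by
    simp only [Jbar₂]
    have hf1 : Integrable (fun z : Tup A₁ A₂ =>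
        (∑ a, ∑ b, z.2.2.1 a * R₂ a b * z.2.2.2 b) + D₂ z.2.2.2 z.1) σ := hiB₂.add hiD₂
    have hf2 : Integrable (fun z : Tup A₁ A₂ => ξ₂ * ν₁ z.1) σ := hiν₁.const_mul ξ₂
    rw [integral_sub hf1 hf2, integral_add hiB₂ hiD₂, integral_const_mul]
  -- the inequality from deviations of player π₁
  have hA₁' : ∀ x ∈ stdSimplex ℝ (Fin A₁),
      -(∫ z, (∑ a, ∑ b, z.1 a * R₁ a b * z.2.1 b) ∂σ) + ε₁ * (∫ z, ν₁ z.1 ∂σ)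
        ≤ -(∑ a, ∑ b, x a * R₁ a b * (∫ z, z.2.1 ∂σ) b) + ε₁ * ν₁ x := by
    intro x hx
    have h := hCCEπ₁ x hx
    rw [hJ1] at h
    have hdev : ∫ z, J₁ A₁ A₂ R₁ D₁ ν₁ ε₁ (x, z.2) ∂σ
        = -(∑ a, ∑ b, x a * R₁ a b * (∫ z, z.2.1 ∂σ) b)
          - (∫ z, D₁ z.2.1 z.2.2.1 ∂σ) + ε₁ * ν₁ x := by
      have hfe : (fun z : Tup A₁ A₂ => J₁ A₁ A₂ R₁ D₁ ν₁ ε₁ (x, z.2))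
          = fun z => -(∑ a, ∑ b, x a * R₁ a b * z.2.1 b)
            - D₁ z.2.1 z.2.2.1 + ε₁ * ν₁ x := rfl
      have hbxn : Integrable (fun z : Tup A₁ A₂ =>
          -(∑ a, ∑ b, x a * R₁ a b * z.2.1 b)) σ := (integrable_bilin R₁ x hi21).neg
      have hbxnd : Integrable (fun z : Tup A₁ A₂ =>
          -(∑ a, ∑ b, x a * R₁ a b * z.2.1 b) - D₁ z.2.1 z.2.2.1) σ := hbxn.sub hiD₁
      rw [hfe, integral_add hbxnd (integrable_const _),
        integral_sub hbxn hiD₁, integral_neg,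
        integral_bilin R₁ x hi21, integral_const]
      simp
    rw [hdev] at h
    linarith
  -- the inequality from deviations of adversary p₁ (with Jensen on the concave part)
  have hB₁' : ∀ y ∈ stdSimplex ℝ (Fin A₂),
      (∫ z, (∑ a, ∑ b, z.1 a * R₁ a b * z.2.1 b) ∂σ) + (∫ z, D₁ z.2.1 z.2.2.1 ∂σ)
          + (ξ₁ * ν₂ (∫ z, z.2.2.1 ∂σ) - ξ₁ * (∫ z, ν₂ z.2.2.1 ∂σ))
        ≤ (∑ a, ∑ b, (∫ z, z.1 ∂σ) a * R₁ a b * y b) + D₁ y (∫ z, z.2.2.1 ∂σ) := by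
    intro y hy
    have h := hCCEp₁ y hy
    rw [hJbar1] at h
    have hiDy : Integrable (fun z : Tup A₁ A₂ => D₁ y z.2.2.1) σ :=
      integrable_of_contOn hTcomp hTcl haeT
        (hD₁cont.comp (continuous_const.prodMk hc221).continuousOn
          (fun z hz => Set.mem_prod.mpr ⟨hy, (hTmem z hz).2.2.1⟩))
    have hdev : ∫ z, Jbar₁ A₁ A₂ R₁ D₁ ν₂ ξ₁ (z.1, y, z.2.2) ∂σ
        = (∑ a, ∑ b, (∫ z, z.1 ∂σ) a * R₁ a b * y b)
          + ∫ z, (D₁ y z.2.2.1 - ξ₁ * ν₂ z.2.2.1) ∂σ := by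
      have hfe : (fun z : Tup A₁ A₂ => Jbar₁ A₁ A₂ R₁ D₁ ν₂ ξ₁ (z.1, y, z.2.2))
          = fun z => (∑ a, ∑ b, z.1 a * R₁ a b * y b)
            + (D₁ y z.2.2.1 - ξ₁ * ν₂ z.2.2.1) := by
        funext z; simp only [Jbar₁]; ring
      have hDsub : Integrable (fun z : Tup A₁ A₂ =>
          D₁ y z.2.2.1 - ξ₁ * ν₂ z.2.2.1) σ := hiDy.sub (hiν₂.const_mul ξ₁)
      rw [hfe, integral_add (integrable_bilin' R₁ y hi1) hDsub,
        integral_bilin' R₁ y hi1]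
    rw [hdev] at h
    have hcontg : ContinuousOn (fun w : Fin A₂ → ℝ => D₁ y w - ξ₁ * ν₂ w)
        (stdSimplex ℝ (Fin A₂)) := by
      refine ContinuousOn.sub ?_ (continuousOn_const.mul hν₂cont)
      exact hD₁cont.comp (continuous_const.prodMk continuous_id).continuousOn
        (fun w hw => Set.mem_prod.mpr ⟨hy, hw⟩)
    have hjen : ∫ z, (D₁ y z.2.2.1 - ξ₁ * ν₂ z.2.2.1) ∂σ
        ≤ D₁ y (∫ z, z.2.2.1 ∂σ) - ξ₁ * ν₂ (∫ z, z.2.2.1 ∂σ) := by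
      have := (hconc₁ y hy).le_map_integral hcontg (isClosed_stdSimplex _ _) hae221 hi221
        (by simpa [Function.comp_def, Pi.sub_def] using hiDy.sub (hiν₂.const_mul ξ₁))
      simpa using this
    linarith
  -- the inequality from deviations of player π₂
  have hA₂' : ∀ y ∈ stdSimplex ℝ (Fin A₂),
      -(∫ z, (∑ a, ∑ b, z.2.2.1 a * R₂ a b * z.2.2.2 b) ∂σ) + ε₂ * (∫ z, ν₂ z.2.2.1 ∂σ)
        ≤ -(∑ a, ∑ b, y a * R₂ a b * (∫ z, z.2.2.2 ∂σ) b) + ε₂ * ν₂ y := by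
    intro y hy
    have h := hCCEπ₂ y hy
    rw [hJ2] at h
    have hdev : ∫ z, J₂ A₁ A₂ R₂ D₂ ν₂ ε₂ (z.1, z.2.1, y, z.2.2.2) ∂σ
        = -(∑ a, ∑ b, y a * R₂ a b * (∫ z, z.2.2.2 ∂σ) b)
          - (∫ z, D₂ z.2.2.2 z.1 ∂σ) + ε₂ * ν₂ y := by
      have hfe : (fun z : Tup A₁ A₂ => J₂ A₁ A₂ R₂ D₂ ν₂ ε₂ (z.1, z.2.1, y, z.2.2.2))
          = fun z => -(∑ a, ∑ b, y a * R₂ a b * z.2.2.2 b)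
            - D₂ z.2.2.2 z.1 + ε₂ * ν₂ y := rfl
      have hbxn : Integrable (fun z : Tup A₁ A₂ =>
          -(∑ a, ∑ b, y a * R₂ a b * z.2.2.2 b)) σ := (integrable_bilin R₂ y hi222).neg
      have hbxnd : Integrable (fun z : Tup A₁ A₂ =>
          -(∑ a, ∑ b, y a * R₂ a b * z.2.2.2 b) - D₂ z.2.2.2 z.1) σ := hbxn.sub hiD₂
      rw [hfe, integral_add hbxnd (integrable_const _),
        integral_sub hbxn hiD₂, integral_neg,
        integral_bilin R₂ y hi222, integral_const]
      simp
    rw [hdev] at h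
    linarith
  -- the inequality from deviations of adversary p₂ (with Jensen on the concave part)
  have hB₂' : ∀ x ∈ stdSimplex ℝ (Fin A₁),
      (∫ z, (∑ a, ∑ b, z.2.2.1 a * R₂ a b * z.2.2.2 b) ∂σ) + (∫ z, D₂ z.2.2.2 z.1 ∂σ)
          + (ξ₂ * ν₁ (∫ z, z.1 ∂σ) - ξ₂ * (∫ z, ν₁ z.1 ∂σ))
        ≤ (∑ a, ∑ b, (∫ z, z.2.2.1 ∂σ) a * R₂ a b * x b) + D₂ x (∫ z, z.1 ∂σ) := by
    intro x hx
    have h := hCCEp₂ x hx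
    rw [hJbar2] at h
    have hiDx : Integrable (fun z : Tup A₁ A₂ => D₂ x z.1) σ :=
      integrable_of_contOn hTcomp hTcl haeT
        (hD₂cont.comp (continuous_const.prodMk hc1).continuousOn
          (fun z hz => Set.mem_prod.mpr ⟨hx, (hTmem z hz).1⟩))
    have hdev : ∫ z, Jbar₂ A₁ A₂ R₂ D₂ ν₁ ξ₂ (z.1, z.2.1, z.2.2.1, x) ∂σ
        = (∑ a, ∑ b, (∫ z, z.2.2.1 ∂σ) a * R₂ a b * x b)
          + ∫ z, (D₂ x z.1 - ξ₂ * ν₁ z.1) ∂σ := by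
      have hfe : (fun z : Tup A₁ A₂ => Jbar₂ A₁ A₂ R₂ D₂ ν₁ ξ₂ (z.1, z.2.1, z.2.2.1, x))
          = fun z => (∑ a, ∑ b, z.2.2.1 a * R₂ a b * x b)
            + (D₂ x z.1 - ξ₂ * ν₁ z.1) := by
        funext z; simp only [Jbar₂]; ring
      have hDsub : Integrable (fun z : Tup A₁ A₂ =>
          D₂ x z.1 - ξ₂ * ν₁ z.1) σ := hiDx.sub (hiν₁.const_mul ξ₂)
      rw [hfe, integral_add (integrable_bilin' R₂ x hi221) hDsub,
        integral_bilin' R₂ x hi221]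
    rw [hdev] at h
    have hcontg : ContinuousOn (fun w : Fin A₁ → ℝ => D₂ x w - ξ₂ * ν₁ w)
        (stdSimplex ℝ (Fin A₁)) := by
      refine ContinuousOn.sub ?_ (continuousOn_const.mul hν₁cont)
      exact hD₂cont.comp (continuous_const.prodMk continuous_id).continuousOn
        (fun w hw => Set.mem_prod.mpr ⟨hx, hw⟩)
    have hjen : ∫ z, (D₂ x z.1 - ξ₂ * ν₁ z.1) ∂σ
        ≤ D₂ x (∫ z, z.1 ∂σ) - ξ₂ * ν₁ (∫ z, z.1 ∂σ) := by
      have := (hconc₂ x hx).le_map_integral hcontg (isClosed_stdSimplex _ _) hae1 hi1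
        (by simpa [Function.comp_def, Pi.sub_def] using hiDx.sub (hiν₁.const_mul ξ₂))
      simpa using this
    linarith
  -- Jensen inequalities (convex direction)
  have hJD₁ : D₁ (∫ z, z.2.1 ∂σ) (∫ z, z.2.2.1 ∂σ) ≤ ∫ z, D₁ z.2.1 z.2.2.1 ∂σ := by
    have haepair : ∀ᵐ z ∂σ, (fun z : Tup A₁ A₂ => (z.2.1, z.2.2.1)) z
        ∈ (stdSimplex ℝ (Fin A₂)) ×ˢ (stdSimplex ℝ (Fin A₂)) :=
      hsupp.mono fun z h => Set.mem_prod.mpr ⟨h.2.1, h.2.2.1⟩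
    have := hD₁conv.map_integral_le hD₁cont
      ((isClosed_stdSimplex _ _).prod (isClosed_stdSimplex _ _)) haepair (hi21.prodMk hi221)
      (by simpa [Function.comp_def] using hiD₁)
    rw [integral_pair hi21 hi221] at this
    simpa using this
  have hJD₂ : D₂ (∫ z, z.2.2.2 ∂σ) (∫ z, z.1 ∂σ) ≤ ∫ z, D₂ z.2.2.2 z.1 ∂σ := by
    have haepair : ∀ᵐ z ∂σ, (fun z : Tup A₁ A₂ => (z.2.2.2, z.1)) z
        ∈ (stdSimplex ℝ (Fin A₁)) ×ˢ (stdSimplex ℝ (Fin A₁)) :=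
      hsupp.mono fun z h => Set.mem_prod.mpr ⟨h.2.2.2, h.1⟩
    have := hD₂conv.map_integral_le hD₂cont
      ((isClosed_stdSimplex _ _).prod (isClosed_stdSimplex _ _)) haepair (hi222.prodMk hi1)
      (by simpa [Function.comp_def] using hiD₂)
    rw [integral_pair hi222 hi1] at this
    simpa using this
  have hJν₁ : ν₁ (∫ z, z.1 ∂σ) ≤ ∫ z, ν₁ z.1 ∂σ := by
    have := hν₁conv.convexOn.map_integral_le hν₁cont (isClosed_stdSimplex _ _) hae1 hi1
      (by simpa [Function.comp_def] using hiν₁)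
    simpa using this
  have hJν₂ : ν₂ (∫ z, z.2.2.1 ∂σ) ≤ ∫ z, ν₂ z.2.2.1 ∂σ := by
    have := hν₂conv.convexOn.map_integral_le hν₂cont (isClosed_stdSimplex _ _) hae221 hi221
      (by simpa [Function.comp_def] using hiν₂)
    simpa using this
  -- the two key scalar inequalities
  have hE₁ : ξ₁ * ν₂ (∫ z, z.2.2.1 ∂σ) - ξ₁ * (∫ z, ν₂ z.2.2.1 ∂σ)
      ≤ ε₁ * ν₁ (∫ z, z.1 ∂σ) - ε₁ * (∫ z, ν₁ z.1 ∂σ) := by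
    have ha := hA₁' _ hm1
    have hb := hB₁' _ hm21
    linarith
  have hE₂ : ξ₂ * ν₁ (∫ z, z.1 ∂σ) - ξ₂ * (∫ z, ν₁ z.1 ∂σ)
      ≤ ε₂ * ν₂ (∫ z, z.2.2.1 ∂σ) - ε₂ * (∫ z, ν₂ z.2.2.1 ∂σ) := by
    have ha := hA₂' _ hm221
    have hb := hB₂' _ hm222
    linarith
  have hξξ : ξ₁ * ξ₂ ≤ ε₁ * ε₂ := by
    rw [div_le_div_iff₀ hε₂ hξ₁] at hratio
    linarith
  have hg1n : ν₁ (∫ z, z.1 ∂σ) - (∫ z, ν₁ z.1 ∂σ) ≤ 0 := by linarith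
  have hg2n : ν₂ (∫ z, z.2.2.1 ∂σ) - (∫ z, ν₂ z.2.2.1 ∂σ) ≤ 0 := by linarith
  have hg₁ : ε₁ * ν₁ (∫ z, z.1 ∂σ) - ε₁ * (∫ z, ν₁ z.1 ∂σ)
      ≤ ξ₁ * ν₂ (∫ z, z.2.2.1 ∂σ) - ξ₁ * (∫ z, ν₂ z.2.2.1 ∂σ) := by
    have step1 : ε₁ * ε₂ * (ν₁ (∫ z, z.1 ∂σ) - (∫ z, ν₁ z.1 ∂σ))
        ≤ ξ₁ * ξ₂ * (ν₁ (∫ z, z.1 ∂σ) - (∫ z, ν₁ z.1 ∂σ)) :=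
      mul_le_mul_of_nonpos_right hξξ hg1n
    have step2 : ξ₁ * (ξ₂ * (ν₁ (∫ z, z.1 ∂σ) - (∫ z, ν₁ z.1 ∂σ)))
        ≤ ξ₁ * (ε₂ * (ν₂ (∫ z, z.2.2.1 ∂σ) - (∫ z, ν₂ z.2.2.1 ∂σ))) :=
      mul_le_mul_of_nonneg_left (by nlinarith [hE₂]) hξ₁.le
    have step3 : ε₂ * (ε₁ * ν₁ (∫ z, z.1 ∂σ) - ε₁ * (∫ z, ν₁ z.1 ∂σ))
        ≤ ε₂ * (ξ₁ * ν₂ (∫ z, z.2.2.1 ∂σ) - ξ₁ * (∫ z, ν₂ z.2.2.1 ∂σ)) := by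
      nlinarith [step1, step2]
    exact le_of_mul_le_mul_left step3 hε₂
  have hg₂ : ε₂ * ν₂ (∫ z, z.2.2.1 ∂σ) - ε₂ * (∫ z, ν₂ z.2.2.1 ∂σ)
      ≤ ξ₂ * ν₁ (∫ z, z.1 ∂σ) - ξ₂ * (∫ z, ν₁ z.1 ∂σ) := by
    have step1 : ε₁ * ε₂ * (ν₂ (∫ z, z.2.2.1 ∂σ) - (∫ z, ν₂ z.2.2.1 ∂σ))
        ≤ ξ₁ * ξ₂ * (ν₂ (∫ z, z.2.2.1 ∂σ) - (∫ z, ν₂ z.2.2.1 ∂σ)) :=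
      mul_le_mul_of_nonpos_right hξξ hg2n
    have step2 : ξ₂ * (ξ₁ * (ν₂ (∫ z, z.2.2.1 ∂σ) - (∫ z, ν₂ z.2.2.1 ∂σ)))
        ≤ ξ₂ * (ε₁ * (ν₁ (∫ z, z.1 ∂σ) - (∫ z, ν₁ z.1 ∂σ))) :=
      mul_le_mul_of_nonneg_left (by nlinarith [hE₁]) hξ₂.le
    have step3 : ε₁ * (ε₂ * ν₂ (∫ z, z.2.2.1 ∂σ) - ε₂ * (∫ z, ν₂ z.2.2.1 ∂σ))
        ≤ ε₁ * (ξ₂ * ν₁ (∫ z, z.1 ∂σ) - ξ₂ * (∫ z, ν₁ z.1 ∂σ)) := by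
      nlinarith [step1, step2]
    exact le_of_mul_le_mul_left step3 hε₁
  -- assemble the conclusion
  refine ⟨hm1, hm221, ?_, ?_⟩
  · intro x hx
    have hDcontπo : ContinuousOn (fun p => D₁ p (∫ z, z.2.2.1 ∂σ))
        (stdSimplex ℝ (Fin A₂)) :=
      hD₁cont.comp (continuous_id.prodMk continuous_const).continuousOn
        (fun p hp => Set.mem_prod.mpr ⟨hp, hm221⟩)
    have := loss_aux R₁ D₁ ν₁ ε₁ (∫ z, z.1 ∂σ) (∫ z, z.2.2.1 ∂σ) (∫ z, z.2.1 ∂σ)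
      hm21 hDcontπo
      (∫ z, (∑ a, ∑ b, z.1 a * R₁ a b * z.2.1 b) ∂σ)
      (∫ z, D₁ z.2.1 z.2.2.1 ∂σ) (∫ z, ν₁ z.1 ∂σ)
      (ξ₁ * ν₂ (∫ z, z.2.2.1 ∂σ) - ξ₁ * (∫ z, ν₂ z.2.2.1 ∂σ))
      hA₁' hB₁' hJD₁ hg₁ x hx
    simpa only [loss1] using this
  · intro y hy
    have hDcontπo : ContinuousOn (fun p => D₂ p (∫ z, z.1 ∂σ))
        (stdSimplex ℝ (Fin A₁)) :=
      hD₂cont.comp (continuous_id.prodMk continuous_const).continuousOn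
        (fun p hp => Set.mem_prod.mpr ⟨hp, hm1⟩)
    have := loss_aux R₂ D₂ ν₂ ε₂ (∫ z, z.2.2.1 ∂σ) (∫ z, z.1 ∂σ) (∫ z, z.2.2.2 ∂σ)
      hm222 hDcontπo
      (∫ z, (∑ a, ∑ b, z.2.2.1 a * R₂ a b * z.2.2.2 b) ∂σ)
      (∫ z, D₂ z.2.2.2 z.1 ∂σ) (∫ z, ν₂ z.2.2.1 ∂σ)
      (ξ₂ * ν₁ (∫ z, z.1 ∂σ) - ξ₂ * (∫ z, ν₁ z.1 ∂σ))
      hA₂' hB₂' hJD₂ hg₂ y hy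
    simpa only [loss2] using this
end

section
/- Equivalence of Nash equilibria of the auxiliary 2n-player game and RQE (action-dependent risk): assume each D_i : P_{−i} × P_{−i} → ℝ is jointly continuous and convex in its first argument, ν_i is continuous and strictly convex, ε_i > 0, ξ_{i,k} ≥ 0. (a) If (π*, p*) is a Nash equilibrium of the action-dependent 2n-player game with losses J_i and J̄_i, then π* is a risk-adjusted quantal response equilibrium of the action-dependent risk-averse game with losses f_i^{ε_i}(π_i, π_{−i}) = Σ_{j=1}^{A_i} π_i(j) · sup_{p ∈ P_{−i}} ( −⟨R_{i,j}, p⟩ − D_i(p, π_{−i}) ) + ε_i ν_i(π_i). (b) Conversely, if π* is such an RQE and for each i one sets p_i* = (p*_{i,j})_{j=1}^{A_i} with p*_{i,j} ∈ argmax_{p ∈ P_{−i}} ( −⟨R_{i,j}, p⟩ − D_i(p, π_{−i}*) ), then (π*, p*) is a Nash equilibrium of the action-dependent 2n-player game. -/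
open Finset

/-- The space of (concatenations of) opponents' strategy profiles of player `i`. -/
abbrev OppProfile (n : ℕ) (A : Fin n → ℕ) (i : Fin n) : Type :=
  ∀ j : {j : Fin n // j ≠ i}, Fin (A j.1) → ℝ

/-- `P_{−i} = ∏_{j ≠ i} Δ_{A_j}`. -/
def OppSimplex (n : ℕ) (A : Fin n → ℕ) (i : Fin n) : Set (OppProfile n A i) :=
  {p | ∀ j, p j ∈ stdSimplex ℝ (Fin (A j.1))}

/-- Index set for the concatenation `ℝ^{A_{−i}}`, `A_{−i} = Σ_{j≠i} A_j`. -/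
abbrev OppIdx (n : ℕ) (A : Fin n → ℕ) (i : Fin n) : Type :=
  Σ j : {j : Fin n // j ≠ i}, Fin (A j.1)

/-- The inner product `⟨R_{i,j}, p⟩` of a row of `R_i` with `p ∈ ℝ^{A_{−i}}`. -/
def rowPair (n : ℕ) (A : Fin n → ℕ) (i : Fin n)
    (Rrow : OppIdx n A i → ℝ) (p : OppProfile n A i) : ℝ :=
  ∑ b : OppIdx n A i, Rrow b * p b.1 b.2

/-- The restriction `π_{−i}`. -/
def restr (n : ℕ) (A : Fin n → ℕ) (π : ∀ j, Fin (A j) → ℝ) (i : Fin n) :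
    OppProfile n A i := fun j => π j.1

/-- Regularized action-dependent risk-averse loss
`f_i^{ε_i}(π) = Σ_j π_i(j) sup_{p ∈ P_{−i}}( −⟨R_{i,j},p⟩ − D_i(p,π_{−i}) ) + ε_i ν_i(π_i)`. -/
noncomputable def actRegLoss (n : ℕ) (A : Fin n → ℕ)
    (R : ∀ i : Fin n, Fin (A i) → OppIdx n A i → ℝ)
    (D : ∀ i : Fin n, OppProfile n A i → OppProfile n A i → ℝ)
    (ν : ∀ i : Fin n, (Fin (A i) → ℝ) → ℝ) (ε : Fin n → ℝ)
    (i : Fin n) (π : ∀ j, Fin (A j) → ℝ) : ℝ :=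
  (∑ a : Fin (A i), π i a *
    sSup ((fun p => -(rowPair n A i (R i a) p) - D i p (restr n A π i)) ''
      OppSimplex n A i)) + ε i * ν i (π i)

/-- Loss of the `i`-th original player in the action-dependent auxiliary `2n`-player
game: `J_i(π,p) = Σ_j π_i(j)( −⟨R_{i,j}, p_{i,j}⟩ − D_i(p_{i,j}, π_{−i}) ) + ε_i ν_i(π_i)`. -/
noncomputable def actJ (n : ℕ) (A : Fin n → ℕ)
    (R : ∀ i : Fin n, Fin (A i) → OppIdx n A i → ℝ)
    (D : ∀ i : Fin n, OppProfile n A i → OppProfile n A i → ℝ)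
    (ν : ∀ i : Fin n, (Fin (A i) → ℝ) → ℝ) (ε : Fin n → ℝ)
    (i : Fin n) (π : ∀ j, Fin (A j) → ℝ)
    (p : ∀ j : Fin n, Fin (A j) → OppProfile n A j) : ℝ :=
  (∑ a : Fin (A i), π i a *
    (-(rowPair n A i (R i a) (p i a)) - D i (p i a) (restr n A π i)))
    + ε i * ν i (π i)

/-- Loss of the `i`-th adversary in the action-dependent auxiliary `2n`-player game:
`J̄_i(π,p_i) = Σ_j π_i(j)( ⟨R_{i,j}, p_{i,j}⟩ + D_i(p_{i,j}, π_{−i}) ) − Σ_k ξ_{i,k} ν_k(π_k)`. -/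
noncomputable def actJbar (n : ℕ) (A : Fin n → ℕ)
    (R : ∀ i : Fin n, Fin (A i) → OppIdx n A i → ℝ)
    (D : ∀ i : Fin n, OppProfile n A i → OppProfile n A i → ℝ)
    (ν : ∀ i : Fin n, (Fin (A i) → ℝ) → ℝ) (ξ : Fin n → Fin n → ℝ)
    (i : Fin n) (π : ∀ j, Fin (A j) → ℝ)
    (p : ∀ j : Fin n, Fin (A j) → OppProfile n A j) : ℝ :=
  (∑ a : Fin (A i), π i a *
    (rowPair n A i (R i a) (p i a) + D i (p i a) (restr n A π i)))
    - ∑ k, ξ i k * ν k (π k)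

lemma restr_update_aux (n : ℕ) (A : Fin n → ℕ) (π : ∀ j, Fin (A j) → ℝ) (i : Fin n)
    (x : Fin (A i) → ℝ) : restr n A (Function.update π i x) i = restr n A π i := by
  funext j
  show Function.update π i x j.1 = π j.1
  exact Function.update_of_ne j.2 x π

lemma oppSimplex_compact_aux (n : ℕ) (A : Fin n → ℕ) (i : Fin n) :
    IsCompact (OppSimplex n A i) := by
  have h : OppSimplex n A i = Set.pi Set.univ (fun j : {j : Fin n // j ≠ i} => stdSimplex ℝ (Fin (A j.1))) := by
    ext p; simp [OppSimplex, Set.mem_pi]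
  rw [h]
  exact isCompact_univ_pi fun j => isCompact_stdSimplex _ _

lemma g_contOn_aux (n : ℕ) (A : Fin n → ℕ) (i : Fin n)
    (Rrow : OppIdx n A i → ℝ)
    (D : ∀ i : Fin n, OppProfile n A i → OppProfile n A i → ℝ)
    (hDcont : ContinuousOn (fun q : OppProfile n A i × OppProfile n A i => D i q.1 q.2)
      (OppSimplex n A i ×ˢ OppSimplex n A i))
    (q : OppProfile n A i) (hq : q ∈ OppSimplex n A i) :
    ContinuousOn (fun p => -(rowPair n A i Rrow p) - D i p q) (OppSimplex n A i) := by
  have h1 : Continuous (fun p : OppProfile n A i => rowPair n A i Rrow p) := by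
    unfold rowPair
    exact continuous_finset_sum _ fun b _ =>
      continuous_const.mul ((continuous_apply b.2).comp (continuous_apply b.1))
  have hpair : Continuous (fun p : OppProfile n A i => (p, q)) :=
    continuous_id.prodMk continuous_const
  have h2 : ContinuousOn (fun p : OppProfile n A i => D i p q) (OppSimplex n A i) :=
    hDcont.comp hpair.continuousOn (fun p hp => ⟨hp, hq⟩)
  exact (h1.neg.continuousOn).sub h2

lemma sum_le_cancel_aux {m : ℕ} (f g : Fin m → ℝ) (a : Fin m)
    (heq : ∀ b, b ≠ a → f b = g b) (hle : ∑ b, f b ≤ ∑ b, g b) : f a ≤ g a := by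
  classical
  rw [← Finset.sum_erase_add Finset.univ f (Finset.mem_univ a),
      ← Finset.sum_erase_add Finset.univ g (Finset.mem_univ a)] at hle
  have h : ∑ b ∈ Finset.univ.erase a, f b = ∑ b ∈ Finset.univ.erase a, g b :=
    Finset.sum_congr rfl fun b hb => heq b (Finset.ne_of_mem_erase hb)
  linarith

/-- **Equivalence of Nash equilibria of the auxiliary `2n`-player game and RQE
(action-dependent risk).**  (a) A Nash equilibrium `(π*, p*)` of the action-dependent
`2n`-player game yields an RQE `π*` of the action-dependent risk-averse game.
(b) Conversely, an RQE `π*` together with adversaries `p*_{i,j}` maximizing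
`−⟨R_{i,j}, p⟩ − D_i(p, π_{−i}*)` over `P_{−i}` yields a Nash equilibrium `(π*, p*)`
of the `2n`-player game. -/
theorem action_dependent_nash_2n_iff_RQE
    (n : ℕ) (hn : 2 ≤ n) (A : Fin n → ℕ) (hA : ∀ i, 1 ≤ A i)
    (R : ∀ i : Fin n, Fin (A i) → OppIdx n A i → ℝ)
    (D : ∀ i : Fin n, OppProfile n A i → OppProfile n A i → ℝ)
    (ν : ∀ i : Fin n, (Fin (A i) → ℝ) → ℝ)
    (ε : Fin n → ℝ) (ξ : Fin n → Fin n → ℝ)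
    (hDcont : ∀ i, ContinuousOn (fun q : OppProfile n A i × OppProfile n A i => D i q.1 q.2)
      (OppSimplex n A i ×ˢ OppSimplex n A i))
    (hDconv : ∀ i, ∀ q ∈ OppSimplex n A i,
      ConvexOn ℝ (OppSimplex n A i) (fun p => D i p q))
    (hνcont : ∀ i, ContinuousOn (ν i) (stdSimplex ℝ (Fin (A i))))
    (hνconv : ∀ i, StrictConvexOn ℝ (stdSimplex ℝ (Fin (A i))) (ν i))
    (hε : ∀ i, 0 < ε i) (hξ : ∀ i k, 0 ≤ ξ i k) :
    -- (a) Nash of the action-dependent 2n-player game ⟹ RQE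
    ((∀ (π : ∀ j, Fin (A j) → ℝ) (p : ∀ j : Fin n, Fin (A j) → OppProfile n A j),
      (∀ j, π j ∈ stdSimplex ℝ (Fin (A j))) →
      (∀ j a, p j a ∈ OppSimplex n A j) →
      (∀ i : Fin n, ∀ x ∈ stdSimplex ℝ (Fin (A i)),
        actJ n A R D ν ε i π p ≤ actJ n A R D ν ε i (Function.update π i x) p) →
      (∀ i : Fin n, ∀ pp : Fin (A i) → OppProfile n A i, (∀ a, pp a ∈ OppSimplex n A i) →
        actJbar n A R D ν ξ i π p ≤ actJbar n A R D ν ξ i π (Function.update p i pp)) →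
      (∀ i : Fin n, ∀ x ∈ stdSimplex ℝ (Fin (A i)),
        actRegLoss n A R D ν ε i π ≤ actRegLoss n A R D ν ε i (Function.update π i x)))
    ∧
    -- (b) RQE together with rowwise argmax adversaries ⟹ Nash of the 2n-player game
    (∀ (π : ∀ j, Fin (A j) → ℝ) (p : ∀ j : Fin n, Fin (A j) → OppProfile n A j),
      (∀ j, π j ∈ stdSimplex ℝ (Fin (A j))) →
      (∀ i : Fin n, ∀ x ∈ stdSimplex ℝ (Fin (A i)),
        actRegLoss n A R D ν ε i π ≤ actRegLoss n A R D ν ε i (Function.update π i x)) →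
      (∀ (i : Fin n) (a : Fin (A i)), p i a ∈ OppSimplex n A i ∧
        ∀ q ∈ OppSimplex n A i,
          -(rowPair n A i (R i a) q) - D i q (restr n A π i)
            ≤ -(rowPair n A i (R i a) (p i a)) - D i (p i a) (restr n A π i)) →
      ((∀ i : Fin n, ∀ x ∈ stdSimplex ℝ (Fin (A i)),
          actJ n A R D ν ε i π p ≤ actJ n A R D ν ε i (Function.update π i x) p) ∧
        (∀ i : Fin n, ∀ pp : Fin (A i) → OppProfile n A i,
          (∀ a, pp a ∈ OppSimplex n A i) →
          actJbar n A R D ν ξ i π p ≤ actJbar n A R D ν ξ i π (Function.update p i pp))))) := by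
  constructor
  · -- (a)
    intro π p hπ hp hNash1 hNash2 i x hx
    have hqmem : restr n A π i ∈ OppSimplex n A i := fun j => hπ j.1
    have hbdd : ∀ a : Fin (A i),
        BddAbove ((fun r => -(rowPair n A i (R i a) r) - D i r (restr n A π i)) ''
          OppSimplex n A i) :=
      fun a => (oppSimplex_compact_aux n A i).bddAbove_image
        (g_contOn_aux n A i (R i a) D (hDcont i) _ hqmem)
    -- adversary pointwise optimality
    have hadv : ∀ a : Fin (A i), ∀ r ∈ OppSimplex n A i,
        π i a * (rowPair n A i (R i a) (p i a) + D i (p i a) (restr n A π i))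
          ≤ π i a * (rowPair n A i (R i a) r + D i r (restr n A π i)) := by
      intro a r hr
      have hmem : ∀ a', Function.update (p i) a r a' ∈ OppSimplex n A i := by
        intro a'
        by_cases h : a' = a
        · subst h; simpa using hr
        · rw [Function.update_of_ne h]; exact hp i a'
      have key := hNash2 i (Function.update (p i) a r) hmem
      unfold actJbar at key
      simp only [Function.update_self] at key
      have key' : ∑ a' : Fin (A i),
            π i a' * (rowPair n A i (R i a') (p i a') + D i (p i a') (restr n A π i))
          ≤ ∑ a' : Fin (A i), π i a' * (rowPair n A i (R i a') (Function.update (p i) a r a')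
              + D i (Function.update (p i) a r a') (restr n A π i)) := by
        linarith
      have := sum_le_cancel_aux
        (fun a' => π i a' * (rowPair n A i (R i a') (p i a') + D i (p i a') (restr n A π i)))
        (fun a' => π i a' * (rowPair n A i (R i a') (Function.update (p i) a r a')
              + D i (Function.update (p i) a r a') (restr n A π i))) a
        (by intro b hb; simp [Function.update_of_ne hb]) key'
      simpa using this
    -- sSup facts
    have hle_sup : ∀ a : Fin (A i),
        -(rowPair n A i (R i a) (p i a)) - D i (p i a) (restr n A π i)
          ≤ sSup ((fun r => -(rowPair n A i (R i a) r) - D i r (restr n A π i)) ''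
            OppSimplex n A i) :=
      fun a => le_csSup (hbdd a) ⟨p i a, hp i a, rfl⟩
    have hSa : ∀ a : Fin (A i), π i a ≠ 0 →
        sSup ((fun r => -(rowPair n A i (R i a) r) - D i r (restr n A π i)) ''
            OppSimplex n A i)
          = -(rowPair n A i (R i a) (p i a)) - D i (p i a) (restr n A π i) := by
      intro a ha
      have hpos : 0 < π i a := lt_of_le_of_ne ((hπ i).1 a) (Ne.symm ha)
      refine le_antisymm (csSup_le ⟨_, ⟨p i a, hp i a, rfl⟩⟩ ?_) (hle_sup a)
      rintro _ ⟨r, hr, rfl⟩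
      dsimp only
      have h1 := hadv a r hr
      have h2 := le_of_mul_le_mul_left h1 hpos
      linarith
    -- actRegLoss π = actJ π p
    have e1 : actRegLoss n A R D ν ε i π = actJ n A R D ν ε i π p := by
      unfold actRegLoss actJ
      congr 1
      refine Finset.sum_congr rfl fun a _ => ?_
      by_cases ha : π i a = 0
      · simp [ha]
      · rw [hSa a ha]
    have e2 : actJ n A R D ν ε i (Function.update π i x) p
        ≤ actRegLoss n A R D ν ε i (Function.update π i x) := by
      unfold actRegLoss actJ
      rw [restr_update_aux]
      simp only [Function.update_self]
      have hsum : ∑ a : Fin (A i), x a *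
            (-(rowPair n A i (R i a) (p i a)) - D i (p i a) (restr n A π i))
          ≤ ∑ a : Fin (A i), x a *
            sSup ((fun r => -(rowPair n A i (R i a) r) - D i r (restr n A π i)) ''
              OppSimplex n A i) :=
        Finset.sum_le_sum fun a _ => mul_le_mul_of_nonneg_left (hle_sup a) (hx.1 a)
      linarith
    calc actRegLoss n A R D ν ε i π = actJ n A R D ν ε i π p := e1
      _ ≤ actJ n A R D ν ε i (Function.update π i x) p := hNash1 i x hx
      _ ≤ actRegLoss n A R D ν ε i (Function.update π i x) := e2
  · -- (b)
    intro π p hπ hRQE hpmax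
    have hSa : ∀ (i : Fin n) (a : Fin (A i)),
        sSup ((fun r => -(rowPair n A i (R i a) r) - D i r (restr n A π i)) ''
            OppSimplex n A i)
          = -(rowPair n A i (R i a) (p i a)) - D i (p i a) (restr n A π i) := by
      intro i a
      refine le_antisymm (csSup_le ⟨_, ⟨p i a, (hpmax i a).1, rfl⟩⟩ ?_) ?_
      · rintro _ ⟨r, hr, rfl⟩
        exact (hpmax i a).2 r hr
      · refine le_csSup ⟨-(rowPair n A i (R i a) (p i a)) - D i (p i a) (restr n A π i), ?_⟩
          ⟨p i a, (hpmax i a).1, rfl⟩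
        rintro _ ⟨r, hr, rfl⟩
        exact (hpmax i a).2 r hr
    constructor
    · intro i x hx
      have e1 : actJ n A R D ν ε i π p = actRegLoss n A R D ν ε i π := by
        unfold actRegLoss actJ
        congr 1
        exact Finset.sum_congr rfl fun a _ => by rw [hSa i a]
      have e2 : actJ n A R D ν ε i (Function.update π i x) p
          = actRegLoss n A R D ν ε i (Function.update π i x) := by
        unfold actRegLoss actJ
        rw [restr_update_aux]
        simp only [Function.update_self]
        congr 1
        exact Finset.sum_congr rfl fun a _ => by rw [hSa i a]
      rw [e1, e2]
      exact hRQE i x hx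
    · intro i pp hpp
      unfold actJbar
      simp only [Function.update_self]
      have hsum : ∑ a : Fin (A i), π i a *
            (rowPair n A i (R i a) (p i a) + D i (p i a) (restr n A π i))
          ≤ ∑ a : Fin (A i), π i a *
            (rowPair n A i (R i a) (pp a) + D i (pp a) (restr n A π i)) := by
        refine Finset.sum_le_sum fun a _ => mul_le_mul_of_nonneg_left ?_ ((hπ i).1 a)
        have := (hpmax i a).2 (pp a) (hpp a)
        linarith
      linarith
end

section
/- Model-perturbation recursion bound for risk-averse Markov values: consider two finite-horizon RAMGs that share the same state space, actions, horizon, rewards R_{i,h}, policy-risk penalties D_pol,i and regularizers ν_i, ε_i, but have transition kernels P = (P_h) and P̂ = (P̂_h) respectively, and suppose each D_env,i : Δ_S × Δ_S → ℝ is L-Lipschitz with respect to the ℓ1 norm in its second argument, uniformly over the first argument. Then for every joint Markov policy π, every player i and every step h ∈ {1,…,H}: max_{s} | V^{ε_i}_{i,h}(π; s) − V̂^{ε_i}_{i,h}(π; s) | ≤ L · Σ_{t=h}^{H} max_{(s,a)} ‖ P_t(·|s,a) − P̂_t(·|s,a) ‖₁, where V^{ε_i} and V̂^{ε_i} are the regularized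 risk-averse value functions of the two games. -/
open Finset

/-! ### Finite-horizon risk-averse Markov games (RAMGs)

`n` players with action counts `A i`, state space `Fin S`, horizon `H`.
Time steps are indexed `0, 1, …, H − 1` (so "step `h`" of the paper, `1 ≤ h ≤ H`,
corresponds to `h − 1` here), and `V_{i,h}` for `h ∈ {0,…,H}` with `V_{i,H} ≡ 0`. -/

/-- Joint (pure) actions. -/
abbrev JointAct (n : ℕ) (A : Fin n → ℕ) : Type := ∀ i, Fin (A i)

/-- Opponents' joint (pure) actions of player `i`. -/
abbrev OppAct (n : ℕ) (A : Fin n → ℕ) (i : Fin n) : Type :=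
  ∀ j : {j : Fin n // j ≠ i}, Fin (A j.1)

/-- Combine an action of player `i` with a joint action of its opponents. -/
def joinAct (n : ℕ) (A : Fin n → ℕ) (i : Fin n) (a : Fin (A i)) (b : OppAct n A i) :
    JointAct n A := fun j =>
  if hj : j = i then cast (congrArg (fun k => Fin (A k)) hj).symm a else b ⟨j, hj⟩

/-- The pairing `π_iᵀ Q p` of a payoff matrix `Q` (indexed by player `i`'s actions and
opponents' joint actions) with a mixed strategy `π_i` and an opponents' profile
`p ∈ P_{−i}` (expectation under the product distribution determined by `p`). -/
def pairQ (n : ℕ) (A : Fin n → ℕ) (i : Fin n)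
    (Q : Fin (A i) → OppAct n A i → ℝ) (x : Fin (A i) → ℝ) (p : OppProfile n A i) : ℝ :=
  ∑ a, ∑ b : OppAct n A i, x a * Q a b * ∏ j, p j (b j)

/-- Markov policies: a decision rule for every player, step and state. -/
abbrev Pol (n S : ℕ) (A : Fin n → ℕ) : Type := ∀ i : Fin n, ℕ → Fin S → Fin (A i) → ℝ

/-- The policy-risk operator
`f_pol,i^π(Q) = sup_{p ∈ P_{−i}} ( −π_iᵀ Q p − D_pol,i(p, π_{−i}) )`
applied to a payoff matrix `Q` and a stage strategy profile `πs`. -/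
noncomputable def stageRisk (n : ℕ) (A : Fin n → ℕ)
    (Dpol : ∀ i : Fin n, OppProfile n A i → OppProfile n A i → ℝ) (i : Fin n)
    (Q : Fin (A i) → OppAct n A i → ℝ) (πs : ∀ j, Fin (A j) → ℝ) : ℝ :=
  sSup ((fun p => -(pairQ n A i Q (πs i) p) - Dpol i p (fun j => πs j.1)) ''
    OppSimplex n A i)

/-- The environmental-risk Bellman payoff
`Q_{i,h}(s,a) = R_{i,h}(s,a) + inf_{P̃ ∈ Δ_S} ( Σ_{s′} P̃(s′) V(s′) + D_env,i(P̃, P_h(·|s,a)) )`. -/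
noncomputable def envQ (n S : ℕ) (A : Fin n → ℕ)
    (Denv : Fin n → (Fin S → ℝ) → (Fin S → ℝ) → ℝ)
    (Rw : ∀ i : Fin n, ℕ → Fin S → JointAct n A → ℝ)
    (P : ℕ → Fin S → JointAct n A → Fin S → ℝ)
    (Vnext : Fin S → ℝ) (i : Fin n) (h : ℕ) (s : Fin S) (a : JointAct n A) : ℝ :=
  Rw i h s a +
    sInf ((fun Pt => (∑ s', Pt s' * Vnext s') + Denv i Pt (P h s a)) ''
      stdSimplex ℝ (Fin S))

/-- Risk-averse values by backward induction, indexed by the number `t` of remaining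
steps: `Vt t` is the value function `V_{i, H−t}` (so `Vt 0 = V_{i,H} ≡ 0`). -/
noncomputable def Vt (n S : ℕ) (A : Fin n → ℕ)
    (Dpol : ∀ i : Fin n, OppProfile n A i → OppProfile n A i → ℝ)
    (Denv : Fin n → (Fin S → ℝ) → (Fin S → ℝ) → ℝ)
    (Rw : ∀ i : Fin n, ℕ → Fin S → JointAct n A → ℝ)
    (P : ℕ → Fin S → JointAct n A → Fin S → ℝ)
    (H : ℕ) (π : Pol n S A) : ℕ → Fin n → Fin S → ℝ
  | 0 => fun _ _ => 0
  | (t + 1) => fun i s =>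
      stageRisk n A Dpol i
        (fun a b =>
          envQ n S A Denv Rw P
            (fun s' => Vt n S A Dpol Denv Rw P H π t i s') i (H - (t + 1)) s
            (joinAct n A i a b))
        (fun j => π j (H - (t + 1)) s)

/-- The (unregularized) value `V_{i,h}(π; s)` of the RAMG, `0 ≤ h ≤ H`. -/
noncomputable def Vh (n S : ℕ) (A : Fin n → ℕ)
    (Dpol : ∀ i : Fin n, OppProfile n A i → OppProfile n A i → ℝ)
    (Denv : Fin n → (Fin S → ℝ) → (Fin S → ℝ) → ℝ)
    (Rw : ∀ i : Fin n, ℕ → Fin S → JointAct n A → ℝ)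
    (P : ℕ → Fin S → JointAct n A → Fin S → ℝ)
    (H : ℕ) (π : Pol n S A) (h : ℕ) (i : Fin n) (s : Fin S) : ℝ :=
  Vt n S A Dpol Denv Rw P H π (H - h) i s

/-- The regularized value `V^{ε_i}_{i,h}(π; s) = V_{i,h}(π; s) + ε_i ν_i(π_{i,h}(s))`. -/
noncomputable def VhReg (n S : ℕ) (A : Fin n → ℕ)
    (Dpol : ∀ i : Fin n, OppProfile n A i → OppProfile n A i → ℝ)
    (Denv : Fin n → (Fin S → ℝ) → (Fin S → ℝ) → ℝ)
    (Rw : ∀ i : Fin n, ℕ → Fin S → JointAct n A → ℝ)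
    (P : ℕ → Fin S → JointAct n A → Fin S → ℝ)
    (H : ℕ) (ν : ∀ i : Fin n, (Fin (A i) → ℝ) → ℝ) (ε : Fin n → ℝ)
    (π : Pol n S A) (h : ℕ) (i : Fin n) (s : Fin S) : ℝ :=
  Vh n S A Dpol Denv Rw P H π h i s + ε i * ν i (π i h s)

/-! ### Auxiliary lemmas -/

private lemma abs_csSup_image_sub_le {α : Type*} (s : Set α) (hs : s.Nonempty)
    (f g : α → ℝ) (c : ℝ) (hfg : ∀ x ∈ s, |f x - g x| ≤ c) :
    |sSup (f '' s) - sSup (g '' s)| ≤ c := by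
  obtain ⟨x0, hx0⟩ := hs
  have hc : 0 ≤ c := le_trans (abs_nonneg _) (hfg x0 hx0)
  by_cases hbf : BddAbove (f '' s)
  · have hbg : BddAbove (g '' s) := by
      obtain ⟨M, hM⟩ := hbf
      refine ⟨M + c, ?_⟩
      rintro _ ⟨x, hx, rfl⟩
      have h1 : f x ≤ M := hM ⟨x, hx, rfl⟩
      have h2 := abs_le.mp (hfg x hx)
      linarith [h2.1]
    rw [abs_sub_le_iff]
    constructor
    · rw [sub_le_iff_le_add]
      apply csSup_le (Set.Nonempty.image f ⟨x0, hx0⟩)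
      rintro _ ⟨x, hx, rfl⟩
      have h2 := abs_le.mp (hfg x hx)
      have h3 : g x ≤ sSup (g '' s) := le_csSup hbg ⟨x, hx, rfl⟩
      linarith [h2.1]
    · rw [sub_le_iff_le_add]
      apply csSup_le (Set.Nonempty.image g ⟨x0, hx0⟩)
      rintro _ ⟨x, hx, rfl⟩
      have h2 := abs_le.mp (hfg x hx)
      have h3 : f x ≤ sSup (f '' s) := le_csSup hbf ⟨x, hx, rfl⟩
      linarith [h2.2]
  · have hbg : ¬ BddAbove (g '' s) := by
      intro hbg
      apply hbf
      obtain ⟨M, hM⟩ := hbg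
      refine ⟨M + c, ?_⟩
      rintro _ ⟨x, hx, rfl⟩
      have h1 : g x ≤ M := hM ⟨x, hx, rfl⟩
      have h2 := abs_le.mp (hfg x hx)
      linarith [h2.2]
    rw [Real.sSup_of_not_bddAbove hbf, Real.sSup_of_not_bddAbove hbg]
    simpa using hc

private lemma abs_csInf_image_sub_le {α : Type*} (s : Set α) (hs : s.Nonempty)
    (f g : α → ℝ) (c : ℝ) (hfg : ∀ x ∈ s, |f x - g x| ≤ c) :
    |sInf (f '' s) - sInf (g '' s)| ≤ c := by
  obtain ⟨x0, hx0⟩ := hs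
  have hc : 0 ≤ c := le_trans (abs_nonneg _) (hfg x0 hx0)
  by_cases hbf : BddBelow (f '' s)
  · have hbg : BddBelow (g '' s) := by
      obtain ⟨M, hM⟩ := hbf
      refine ⟨M - c, ?_⟩
      rintro _ ⟨x, hx, rfl⟩
      have h1 : M ≤ f x := hM ⟨x, hx, rfl⟩
      have h2 := abs_le.mp (hfg x hx)
      linarith [h2.2]
    rw [abs_sub_le_iff]
    constructor
    · have h4 : sInf (f '' s) - c ≤ sInf (g '' s) := by
        apply le_csInf (Set.Nonempty.image g ⟨x0, hx0⟩)
        rintro _ ⟨x, hx, rfl⟩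
        have h2 := abs_le.mp (hfg x hx)
        have h3 : sInf (f '' s) ≤ f x := csInf_le hbf ⟨x, hx, rfl⟩
        linarith [h2.1]
      linarith
    · have h4 : sInf (g '' s) - c ≤ sInf (f '' s) := by
        apply le_csInf (Set.Nonempty.image f ⟨x0, hx0⟩)
        rintro _ ⟨x, hx, rfl⟩
        have h2 := abs_le.mp (hfg x hx)
        have h3 : sInf (g '' s) ≤ g x := csInf_le hbg ⟨x, hx, rfl⟩
        linarith [h2.2]
      linarith
  · have hbg : ¬ BddBelow (g '' s) := by
      intro hbg
      apply hbf
      obtain ⟨M, hM⟩ := hbg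
      refine ⟨M - c, ?_⟩
      rintro _ ⟨x, hx, rfl⟩
      have h1 : M ≤ g x := hM ⟨x, hx, rfl⟩
      have h2 := abs_le.mp (hfg x hx)
      linarith [h2.1]
    rw [Real.sInf_of_not_bddBelow hbf, Real.sInf_of_not_bddBelow hbg]
    simpa using hc

private lemma stdSimplex_single {ι : Type*} [Fintype ι] [DecidableEq ι] (a0 : ι) :
    (fun a => if a = a0 then (1:ℝ) else 0) ∈ stdSimplex ℝ ι := by
  constructor
  · intro a; dsimp only; split <;> norm_num
  · simp

private lemma oppSimplex_nonempty (n : ℕ) (A : Fin n → ℕ) (i : Fin n)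
    (hA : ∀ j, 1 ≤ A j) : (OppSimplex n A i).Nonempty :=
  ⟨fun j a => if a = ⟨0, hA j.1⟩ then 1 else 0, fun j => stdSimplex_single _⟩

private lemma abs_pairQ_sub_le (n : ℕ) (A : Fin n → ℕ) (i : Fin n)
    (Q Q' : Fin (A i) → OppAct n A i → ℝ) (x : Fin (A i) → ℝ)
    (hx : x ∈ stdSimplex ℝ (Fin (A i))) (p : OppProfile n A i)
    (hp : p ∈ OppSimplex n A i) (c : ℝ)
    (hQ : ∀ a b, |Q a b - Q' a b| ≤ c) :
    |pairQ n A i Q x p - pairQ n A i Q' x p| ≤ c := by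
  have hprod_nonneg : ∀ b : OppAct n A i, 0 ≤ ∏ j, p j (b j) :=
    fun b => Finset.prod_nonneg fun j _ => (hp j).1 (b j)
  have hsum : ∑ b : OppAct n A i, ∏ j, p j (b j) = 1 := by
    rw [← Fintype.piFinset_univ, ← Finset.prod_univ_sum]
    exact Finset.prod_eq_one fun j _ => (hp j).2
  have key : pairQ n A i Q x p - pairQ n A i Q' x p
      = ∑ a, ∑ b : OppAct n A i, x a * (Q a b - Q' a b) * ∏ j, p j (b j) := by
    unfold pairQ
    rw [← Finset.sum_sub_distrib]
    refine Finset.sum_congr rfl fun a _ => ?_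
    rw [← Finset.sum_sub_distrib]
    refine Finset.sum_congr rfl fun b _ => ?_
    ring
  rw [key]
  calc |∑ a, ∑ b : OppAct n A i, x a * (Q a b - Q' a b) * ∏ j, p j (b j)|
      ≤ ∑ a, |∑ b : OppAct n A i, x a * (Q a b - Q' a b) * ∏ j, p j (b j)| :=
        Finset.abs_sum_le_sum_abs _ _
    _ ≤ ∑ a, ∑ b : OppAct n A i, |x a * (Q a b - Q' a b) * ∏ j, p j (b j)| :=
        Finset.sum_le_sum fun a _ => Finset.abs_sum_le_sum_abs _ _
    _ ≤ ∑ a, ∑ b : OppAct n A i, x a * c * ∏ j, p j (b j) := by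
        refine Finset.sum_le_sum fun a _ => Finset.sum_le_sum fun b _ => ?_
        rw [abs_mul, abs_mul, abs_of_nonneg (hx.1 a), abs_of_nonneg (hprod_nonneg b)]
        exact mul_le_mul_of_nonneg_right
          (mul_le_mul_of_nonneg_left (hQ a b) (hx.1 a)) (hprod_nonneg b)
    _ = ∑ a, x a * c * ∑ b : OppAct n A i, ∏ j, p j (b j) := by
        refine Finset.sum_congr rfl fun a _ => ?_
        rw [Finset.mul_sum]
    _ = c := by
        rw [hsum]
        simp only [mul_one]
        rw [← Finset.sum_mul, hx.2, one_mul]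

private lemma abs_stageRisk_sub_le (n : ℕ) (A : Fin n → ℕ) (hA : ∀ j, 1 ≤ A j)
    (Dpol : ∀ i : Fin n, OppProfile n A i → OppProfile n A i → ℝ) (i : Fin n)
    (Q Q' : Fin (A i) → OppAct n A i → ℝ) (πs : ∀ j, Fin (A j) → ℝ)
    (hπs : ∀ j, πs j ∈ stdSimplex ℝ (Fin (A j))) (c : ℝ)
    (hQ : ∀ a b, |Q a b - Q' a b| ≤ c) :
    |stageRisk n A Dpol i Q πs - stageRisk n A Dpol i Q' πs| ≤ c := by
  apply abs_csSup_image_sub_le _ (oppSimplex_nonempty n A i hA)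
  intro p hp
  have h1 := abs_pairQ_sub_le n A i Q' Q (πs i) (hπs i) p hp c
      (fun a b => by rw [abs_sub_comm]; exact hQ a b)
  have heq : (-(pairQ n A i Q (πs i) p) - Dpol i p (fun j => πs j.1))
      - (-(pairQ n A i Q' (πs i) p) - Dpol i p (fun j => πs j.1))
      = pairQ n A i Q' (πs i) p - pairQ n A i Q (πs i) p := by ring
  rw [heq]
  exact h1

private lemma abs_envQ_sub_le (n S : ℕ) (A : Fin n → ℕ) (hS : 1 ≤ S)
    (Denv : Fin n → (Fin S → ℝ) → (Fin S → ℝ) → ℝ)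
    (Rw : ∀ i : Fin n, ℕ → Fin S → JointAct n A → ℝ)
    (P Phat : ℕ → Fin S → JointAct n A → Fin S → ℝ)
    (hP : ∀ h s a, P h s a ∈ stdSimplex ℝ (Fin S))
    (hPhat : ∀ h s a, Phat h s a ∈ stdSimplex ℝ (Fin S))
    (L : ℝ)
    (hLip : ∀ i : Fin n, ∀ Pt ∈ stdSimplex ℝ (Fin S), ∀ P₁ ∈ stdSimplex ℝ (Fin S),
      ∀ P₂ ∈ stdSimplex ℝ (Fin S),
        |Denv i Pt P₁ - Denv i Pt P₂| ≤ L * ∑ s', |P₁ s' - P₂ s'|)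
    (V V' : Fin S → ℝ) (B : ℝ) (hV : ∀ s', |V s' - V' s'| ≤ B)
    (i : Fin n) (h : ℕ) (s : Fin S) (a : JointAct n A) :
    |envQ n S A Denv Rw P V i h s a - envQ n S A Denv Rw Phat V' i h s a|
      ≤ B + L * ∑ s', |P h s a s' - Phat h s a s'| := by
  unfold envQ
  rw [add_sub_add_left_eq_sub]
  apply abs_csInf_image_sub_le _ ⟨_, stdSimplex_single (⟨0, hS⟩ : Fin S)⟩
  intro Pt hPt
  have h1 : |(∑ s', Pt s' * V s') - ∑ s', Pt s' * V' s'| ≤ B := by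
    rw [← Finset.sum_sub_distrib]
    calc |∑ s', (Pt s' * V s' - Pt s' * V' s')|
        ≤ ∑ s', |Pt s' * V s' - Pt s' * V' s'| := Finset.abs_sum_le_sum_abs _ _
      _ ≤ ∑ s', Pt s' * B := by
          refine Finset.sum_le_sum fun s' _ => ?_
          rw [← mul_sub, abs_mul, abs_of_nonneg (hPt.1 s')]
          exact mul_le_mul_of_nonneg_left (hV s') (hPt.1 s')
      _ = B := by rw [← Finset.sum_mul, hPt.2, one_mul]
  have h2 := hLip i Pt hPt (P h s a) (hP h s a) (Phat h s a) (hPhat h s a)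
  have h3 : (∑ s', Pt s' * V s') + Denv i Pt (P h s a)
      - ((∑ s', Pt s' * V' s') + Denv i Pt (Phat h s a))
      = ((∑ s', Pt s' * V s') - ∑ s', Pt s' * V' s')
        + (Denv i Pt (P h s a) - Denv i Pt (Phat h s a)) := by ring
  rw [h3]
  exact (abs_add_le _ _).trans (add_le_add h1 h2)

private lemma Vt_perturbation (n S H : ℕ) (hS : 1 ≤ S)
    (A : Fin n → ℕ) (hA : ∀ j, 1 ≤ A j)
    (Rw : ∀ i : Fin n, ℕ → Fin S → JointAct n A → ℝ)
    (P Phat : ℕ → Fin S → JointAct n A → Fin S → ℝ)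
    (hP : ∀ h s a, P h s a ∈ stdSimplex ℝ (Fin S))
    (hPhat : ∀ h s a, Phat h s a ∈ stdSimplex ℝ (Fin S))
    (Dpol : ∀ i : Fin n, OppProfile n A i → OppProfile n A i → ℝ)
    (Denv : Fin n → (Fin S → ℝ) → (Fin S → ℝ) → ℝ)
    (L : ℝ) (hL : 0 ≤ L)
    (hLip : ∀ i : Fin n, ∀ Pt ∈ stdSimplex ℝ (Fin S), ∀ P₁ ∈ stdSimplex ℝ (Fin S),
      ∀ P₂ ∈ stdSimplex ℝ (Fin S),
        |Denv i Pt P₁ - Denv i Pt P₂| ≤ L * ∑ s', |P₁ s' - P₂ s'|)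
    (π : Pol n S A) (hπ : ∀ i h s, π i h s ∈ stdSimplex ℝ (Fin (A i)))
    (i : Fin n) :
    ∀ t, t ≤ H → ∀ s : Fin S,
      |Vt n S A Dpol Denv Rw P H π t i s - Vt n S A Dpol Denv Rw Phat H π t i s|
        ≤ L * ∑ u ∈ Finset.Ico (H - t) H,
            ⨆ sa : Fin S × JointAct n A,
              ∑ s', |P u sa.1 sa.2 s' - Phat u sa.1 sa.2 s'| := by
  haveI : Nonempty (Fin S) := ⟨⟨0, hS⟩⟩
  haveI : ∀ j, Nonempty (Fin (A j)) := fun j => ⟨⟨0, hA j⟩⟩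
  intro t
  induction t with
  | zero =>
    intro _ s
    simp [Vt]
  | succ t ih =>
    intro ht s
    have ht' : t ≤ H := Nat.le_of_succ_le ht
    set D : ℕ → ℝ := fun u => ⨆ sa : Fin S × JointAct n A,
        ∑ s', |P u sa.1 sa.2 s' - Phat u sa.1 sa.2 s'| with hD
    have hDle : ∀ u s' a, (∑ s'', |P u s' a s'' - Phat u s' a s''|) ≤ D u := by
      intro u s' a
      rw [hD]
      exact le_ciSup (f := fun sa : Fin S × JointAct n A =>
        ∑ s'', |P u sa.1 sa.2 s'' - Phat u sa.1 sa.2 s''|)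
        (Finite.bddAbove_range _) ⟨s', a⟩
    set B : ℝ := L * ∑ u ∈ Finset.Ico (H - t) H, D u with hB
    have hQbound : ∀ a b,
        |envQ n S A Denv Rw P (fun s' => Vt n S A Dpol Denv Rw P H π t i s') i
            (H - (t + 1)) s (joinAct n A i a b)
          - envQ n S A Denv Rw Phat (fun s' => Vt n S A Dpol Denv Rw Phat H π t i s') i
            (H - (t + 1)) s (joinAct n A i a b)|
        ≤ B + L * D (H - (t + 1)) := by
      intro a b
      have h1 := abs_envQ_sub_le n S A hS Denv Rw P Phat hP hPhat L hLip
        (fun s' => Vt n S A Dpol Denv Rw P H π t i s')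
        (fun s' => Vt n S A Dpol Denv Rw Phat H π t i s') B
        (fun s' => ih ht' s') i (H - (t + 1)) s (joinAct n A i a b)
      refine h1.trans (add_le_add (le_refl B) ?_)
      exact mul_le_mul_of_nonneg_left (hDle _ _ _) hL
    have hmain := abs_stageRisk_sub_le n A hA Dpol i _ _
      (fun j => π j (H - (t + 1)) s) (fun j => hπ j (H - (t + 1)) s)
      (B + L * D (H - (t + 1))) hQbound
    have hsplit : ∑ u ∈ Finset.Ico (H - (t + 1)) H, D u
        = D (H - (t + 1)) + ∑ u ∈ Finset.Ico (H - t) H, D u := by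
      have h1 : H - (t + 1) < H := by omega
      have h2 : H - (t + 1) + 1 = H - t := by omega
      rw [Finset.sum_eq_sum_Ico_succ_bot h1, h2]
    calc |Vt n S A Dpol Denv Rw P H π (t + 1) i s
          - Vt n S A Dpol Denv Rw Phat H π (t + 1) i s|
        ≤ B + L * D (H - (t + 1)) := hmain
      _ = L * ∑ u ∈ Finset.Ico (H - (t + 1)) H, D u := by rw [hsplit]; ring

/-- The policy obtained from `π` by replacing player `i`'s step-`h` decision rule
with `π'`. -/
def replaceStep (n S : ℕ) (A : Fin n → ℕ) (π : Pol n S A) (i : Fin n) (h : ℕ)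
    (π' : Fin S → Fin (A i) → ℝ) : Pol n S A :=
  Function.update π i (fun t s => if t = h then π' s else π i t s)

/-- **Model-perturbation recursion bound for risk-averse Markov values.**
Two RAMGs share everything except the transition kernels `P` and `P̂`.  If each
`D_env,i` is `L`-Lipschitz w.r.t. the ℓ1 norm in its second argument, uniformly over
the first argument, then for every joint Markov policy `π`, player `i` and step
`h < H` (steps are 0-indexed; `h` corresponds to step `h+1 ∈ {1,…,H}` of the paper):
`max_s |V^{ε_i}_{i,h}(π;s) − V̂^{ε_i}_{i,h}(π;s)| ≤ L Σ_{t=h}^{H−1} max_{(s,a)} ‖P_t(·|s,a) − P̂_t(·|s,a)‖₁`. -/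
theorem model_perturbation_recursion_bound
    (n S H : ℕ) (hn : 1 ≤ n) (hS : 1 ≤ S) (hH : 1 ≤ H)
    (A : Fin n → ℕ) (hA : ∀ i, 1 ≤ A i)
    (Rw : ∀ i : Fin n, ℕ → Fin S → JointAct n A → ℝ)
    (P Phat : ℕ → Fin S → JointAct n A → Fin S → ℝ)
    (hP : ∀ h s a, P h s a ∈ stdSimplex ℝ (Fin S))
    (hPhat : ∀ h s a, Phat h s a ∈ stdSimplex ℝ (Fin S))
    (Dpol : ∀ i : Fin n, OppProfile n A i → OppProfile n A i → ℝ)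
    (Denv : Fin n → (Fin S → ℝ) → (Fin S → ℝ) → ℝ)
    (L : ℝ)
    (hLip : ∀ i : Fin n, ∀ Pt ∈ stdSimplex ℝ (Fin S), ∀ P₁ ∈ stdSimplex ℝ (Fin S),
      ∀ P₂ ∈ stdSimplex ℝ (Fin S),
        |Denv i Pt P₁ - Denv i Pt P₂| ≤ L * ∑ s', |P₁ s' - P₂ s'|)
    (hDenvcont : ∀ i P₀, ContinuousOn (fun Pt => Denv i Pt P₀) (stdSimplex ℝ (Fin S)))
    (ν : ∀ i : Fin n, (Fin (A i) → ℝ) → ℝ) (ε : Fin n → ℝ)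
    (π : Pol n S A) (hπ : ∀ i h s, π i h s ∈ stdSimplex ℝ (Fin (A i)))
    (i : Fin n) (h : ℕ) (hh : h < H) :
    ∀ s : Fin S,
      |VhReg n S A Dpol Denv Rw P H ν ε π h i s
          - VhReg n S A Dpol Denv Rw Phat H ν ε π h i s|
        ≤ L * ∑ t ∈ Finset.Ico h H,
            ⨆ sa : Fin S × JointAct n A,
              ∑ s', |P t sa.1 sa.2 s' - Phat t sa.1 sa.2 s'| := by
  haveI : Nonempty (Fin S) := ⟨⟨0, hS⟩⟩
  haveI : ∀ j, Nonempty (Fin (A j)) := fun j => ⟨⟨0, hA j⟩⟩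
  intro s
  simp only [VhReg, add_sub_add_right_eq_sub, Vh]
  by_cases hPeq : ∀ t s' a s'', P t s' a s'' = Phat t s' a s''
  · have hPP : P = Phat := by
      funext t s' a s''
      exact hPeq t s' a s''
    subst hPP
    simp
  · push_neg at hPeq
    obtain ⟨t0, s0, a0, s0', hne⟩ := hPeq
    have hd : 0 < ∑ s'', |P t0 s0 a0 s'' - Phat t0 s0 a0 s''| := by
      apply Finset.sum_pos' (fun x _ => abs_nonneg _)
      exact ⟨s0', Finset.mem_univ _, abs_pos.mpr (sub_ne_zero.mpr hne)⟩
    have hL : 0 ≤ L := by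
      have h0 := hLip i (P t0 s0 a0) (hP t0 s0 a0) (P t0 s0 a0) (hP t0 s0 a0)
        (Phat t0 s0 a0) (hPhat t0 s0 a0)
      exact (mul_nonneg_iff_of_pos_right hd).mp ((abs_nonneg _).trans h0)
    have key := Vt_perturbation n S H hS A hA Rw P Phat hP hPhat Dpol Denv L hL hLip
      π hπ i (H - h) (Nat.sub_le H h) s
    rwa [show H - (H - h) = h by omega] at key
end
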